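/- arXiv:2005.11409 — 8 statements merged into one kernel-verified Lean document; each statement's English description precedes it below -/
import Mathlib

section
/- For a Banach lattice E, the norm of the dual E' is order continuous if and only if f_n(x_n) → 0 for every order bounded sequence (f_n) of E' and every disjoint sequence (x_n) in the closed unit ball of E. -/
/-!
Both directions compare `E'` with limits, on the positive cone of `E`, of positive functionals:
such limits are additive on the cone and extend to elements of `E'` by `x ↦ p x⁺ - p x⁻`.

(⇒) If `|f n| ≤ g`, then `|f n (x n)| ≤ g |x n|`. The components `G n` of `g` in the bands
generated by the disjoint `|x n|` have partial sums below `g`, so `g - ∑_{k<n} G k` decreases to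
its infimum; order continuity of the norm forces `‖G n‖ → 0`, and `G n |x n| = g |x n|`.

(⇐) A net `F i ↓ 0` in `E'` tends to `0` pointwise on the cone. If `‖F i‖ ≥ ε > 0` for all `i`,
pick `0 ≤ u i` in the unit ball with `F i (u i) > ε / 2` and indices `β n` increasing so fast that
`F (β n)` almost vanishes on `∑_{k<n} u (β k)`. Disjointifying the `u (β n)` gives a disjoint
sequence `y` in the unit ball with `F (β n) (y n) ≥ ε / 4 - o(1)`, although `(F (β n))` is order
bounded by `0` and `F (β 0)`.
-/

open Filter Topology NormedSpace

open Filter Topology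

section Defs

/-- A sequence in a lattice ordered group is pairwise disjoint. -/
def DisjSeq {G : Type*} [Lattice G] [AddCommGroup G] (y : ℕ → G) : Prop :=
  ∀ m n : ℕ, m ≠ n → |y m| ⊓ |y n| = 0

/-- The solid hull of a set. -/
def SolidHull {G : Type*} [Lattice G] [AddCommGroup G] (A : Set G) : Set G :=
  {z | ∃ a ∈ A, |z| ≤ |a|}

/-- A sequence is order bounded. -/
def OrdBddSeq {G : Type*} [Preorder G] (y : ℕ → G) : Prop :=
  ∃ a b : G, ∀ n, a ≤ y n ∧ y n ≤ b

/-- A set is L-weakly compact: every disjoint sequence in its solid hull is norm null. -/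
def LWCompactSet {G : Type*} [NormedAddCommGroup G] [Lattice G] (A : Set G) : Prop :=
  ∀ y : ℕ → G, (∀ n, y n ∈ SolidHull A) → DisjSeq y →
    Tendsto (fun n => ‖y n‖) atTop (𝓝 0)

/-- An operator is order L-weakly compact. -/
def OrderLWC {G H : Type*} [NormedAddCommGroup G] [Lattice G] [NormedSpace ℝ G]
    [NormedAddCommGroup H] [Lattice H] [NormedSpace ℝ H] (T : G →L[ℝ] H) : Prop :=
  ∀ x : G, 0 ≤ x → LWCompactSet (T '' Set.Icc 0 x)

/-- An operator is L-weakly compact. -/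
def LWC {X H : Type*} [NormedAddCommGroup X] [NormedSpace ℝ X]
    [NormedAddCommGroup H] [Lattice H] [NormedSpace ℝ H] (T : X →L[ℝ] H) : Prop :=
  LWCompactSet (T '' Metric.closedBall 0 1)

/-- An operator is M-weakly compact. -/
def MWC {G Y : Type*} [NormedAddCommGroup G] [Lattice G] [NormedSpace ℝ G]
    [NormedAddCommGroup Y] [NormedSpace ℝ Y] (T : G →L[ℝ] Y) : Prop :=
  ∀ x : ℕ → G, (∃ C, ∀ n, ‖x n‖ ≤ C) → DisjSeq x →
    Tendsto (fun n => ‖T (x n)‖) atTop (𝓝 0)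

/-- An operator is order M-weakly compact. -/
def OrderMWC {G H : Type*} [NormedAddCommGroup G] [Lattice G] [NormedSpace ℝ G]
    [NormedAddCommGroup H] [NormedSpace ℝ H] [Lattice (StrongDual ℝ H)]
    (T : G →L[ℝ] H) : Prop :=
  ∀ x : ℕ → G, (∀ n, ‖x n‖ ≤ 1) → DisjSeq x →
    ∀ f : ℕ → StrongDual ℝ H, OrdBddSeq f →
      Tendsto (fun n => f n (T (x n))) atTop (𝓝 0)

/-- The norm is order continuous: every decreasing net with infimum `0` is norm null. -/
def OrderContinuousNorm (G : Type*) [NormedAddCommGroup G] [Lattice G] : Prop :=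
  ∀ (ι : Type*) [Preorder ι] [Nonempty ι] [IsDirected ι (· ≤ ·)] (x : ι → G),
    Antitone x → IsGLB (Set.range x) 0 → Tendsto (fun i => ‖x i‖) atTop (𝓝 0)

/-- An operator between Banach lattices is order bounded. -/
def OrderBoundedOp {G H : Type*} [NormedAddCommGroup G] [Lattice G] [NormedSpace ℝ G]
    [NormedAddCommGroup H] [Lattice H] [NormedSpace ℝ H] (T : G →L[ℝ] H) : Prop :=
  ∀ a b : G, ∃ c d : H, ∀ x : G, a ≤ x → x ≤ b → c ≤ T x ∧ T x ≤ d

/-- An operator into a Banach lattice is strong order bounded. -/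
def StrongOrderBounded {X H : Type*} [NormedAddCommGroup X] [NormedSpace ℝ X]
    [NormedAddCommGroup H] [Lattice H] [NormedSpace ℝ H] (T : X →L[ℝ] H) : Prop :=
  ∃ a b : H, ∀ x : X, ‖x‖ ≤ 1 → a ≤ T x ∧ T x ≤ b

end Defs

section LatticeOrderedGroup

variable {α : Type*} [Lattice α] [AddCommGroup α] [IsOrderedAddMonoid α] {a b c : α}

lemma add_inf_le_inf_add_inf (ha : 0 ≤ a) (hb : 0 ≤ b) (hc : 0 ≤ c) :
    (a + b) ⊓ c ≤ a ⊓ c + b ⊓ c := by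
  have h : a ⊓ c + b ⊓ c = ((a + b) ⊓ (a + c)) ⊓ ((c + b) ⊓ (c + c)) := by
    rw [add_inf, inf_add, inf_add]; ac_rfl
  rw [h]
  exact le_inf (le_inf inf_le_left (inf_le_right.trans (le_add_of_nonneg_left ha)))
    (le_inf (inf_le_right.trans (le_add_of_nonneg_right hb))
      (inf_le_right.trans (le_add_of_nonneg_right hc)))

lemma inf_nsmul_le_nsmul_inf (ha : 0 ≤ a) (hb : 0 ≤ b) (n : ℕ) :
    a ⊓ n • b ≤ n • (a ⊓ b) := by
  induction n with
  | zero => simp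
  | succ k ih =>
    calc a ⊓ (k + 1) • b = (k • b + b) ⊓ a := by rw [succ_nsmul, inf_comm]
      _ ≤ k • b ⊓ a + b ⊓ a := add_inf_le_inf_add_inf (nsmul_nonneg hb k) hb ha
      _ ≤ k • (a ⊓ b) + a ⊓ b := by rw [inf_comm _ a, inf_comm b a]; gcongr
      _ = (k + 1) • (a ⊓ b) := (succ_nsmul _ k).symm

lemma nsmul_inf_eq_zero (ha : 0 ≤ a) (hb : 0 ≤ b) (hab : a ⊓ b = 0) (n : ℕ) :
    n • a ⊓ b = 0 := by
  refine le_antisymm ?_ (le_inf (nsmul_nonneg ha n) hb)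
  simpa [inf_comm, hab] using inf_nsmul_le_nsmul_inf hb ha n

lemma nsmul_inf_nsmul_eq_zero (ha : 0 ≤ a) (hb : 0 ≤ b) (hab : a ⊓ b = 0) (m n : ℕ) :
    m • a ⊓ n • b = 0 := by
  rw [inf_comm]
  exact nsmul_inf_eq_zero hb (nsmul_nonneg ha m) (by rw [inf_comm, nsmul_inf_eq_zero ha hb hab]) n

lemma nonneg_of_nsmul_nonneg {n : ℕ} (hn : n ≠ 0) (h : 0 ≤ n • a) : 0 ≤ a := by
  have hle : a⁻ ≤ n • a⁺ :=
    calc a⁻ ≤ n • a⁻ := le_self_nsmul (negPart_nonneg a) hn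
      _ ≤ n • a⁺ := by rwa [← sub_nonneg, ← nsmul_sub, posPart_sub_negPart]
  have h0 : a⁻ ⊓ n • a⁺ = 0 := by
    rw [inf_comm]
    exact nsmul_inf_eq_zero (posPart_nonneg a) (negPart_nonneg a) (posPart_inf_negPart_eq_zero a) n
  rw [← negPart_eq_zero, ← h0]
  exact (inf_eq_left.2 hle).symm

lemma inf_sum_eq_zero {ι : Type*} {s : Finset ι} {w : ι → α} (ha : 0 ≤ a)
    (hw : ∀ i ∈ s, 0 ≤ w i) (h : ∀ i ∈ s, a ⊓ w i = 0) : a ⊓ ∑ i ∈ s, w i = 0 := by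
  induction s using Finset.cons_induction with
  | empty => simpa using ha
  | cons j t hj ih =>
    simp only [Finset.mem_cons, forall_eq_or_imp] at hw h
    rw [Finset.sum_cons]
    refine le_antisymm ?_ (le_inf ha (add_nonneg hw.1 (Finset.sum_nonneg hw.2)))
    calc a ⊓ (w j + ∑ i ∈ t, w i) ≤ w j ⊓ a + (∑ i ∈ t, w i) ⊓ a := by
          rw [inf_comm]; exact add_inf_le_inf_add_inf hw.1 (Finset.sum_nonneg hw.2) ha
      _ = 0 := by rw [inf_comm, h.1, inf_comm, ih hw.2 h.2, add_zero]

lemma sum_le_of_pairwise_inf_eq_zero {ι : Type*} {s : Finset ι} {w : ι → α} (ha : 0 ≤ a)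
    (hw : ∀ i ∈ s, 0 ≤ w i) (hle : ∀ i ∈ s, w i ≤ a)
    (hdisj : ∀ i ∈ s, ∀ j ∈ s, i ≠ j → w i ⊓ w j = 0) : ∑ i ∈ s, w i ≤ a := by
  induction s using Finset.cons_induction with
  | empty => simpa using ha
  | cons j t hj ih =>
    simp only [Finset.mem_cons, forall_eq_or_imp] at hw hle hdisj
    have hjt : w j ⊓ ∑ i ∈ t, w i = 0 :=
      inf_sum_eq_zero hw.1 hw.2 fun i hi => hdisj.1.2 i hi (ne_of_mem_of_not_mem hi hj).symm
    rw [Finset.sum_cons, ← inf_add_sup, hjt, zero_add]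
    exact sup_le hle.1 (ih hw.2 hle.2 fun i hi k hk => hdisj.2 i hi |>.2 k hk)

lemma disjSeq_of_forall_lt {y : ℕ → α} (hy : ∀ n, 0 ≤ y n) (h : ∀ n m, n < m → y m ⊓ y n = 0) :
    DisjSeq y := by
  intro m n hmn
  rw [abs_of_nonneg (hy m), abs_of_nonneg (hy n)]
  rcases hmn.lt_or_gt with hlt | hlt
  · rw [inf_comm]; exact h m n hlt
  · exact h n m hlt

end LatticeOrderedGroup

section NormedLattice

variable {E : Type*} [NormedAddCommGroup E] [Lattice E] [HasSolidNorm E] [IsOrderedAddMonoid E]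

lemma norm_posPart_le (a : E) : ‖a⁺‖ ≤ ‖a‖ :=
  norm_le_norm_of_abs_le_abs <| by
    rw [abs_of_nonneg (posPart_nonneg a)]; exact sup_le (le_abs_self a) (abs_nonneg a)

lemma norm_negPart_le (a : E) : ‖a⁻‖ ≤ ‖a‖ := by
  simpa [posPart_neg] using norm_posPart_le (-a)

variable [NormedSpace ℝ E]

-- The positive cone is closed, and `⌊c n⌋₊ / n • x ≥ 0` by divisibility of positive elements.
instance HasSolidNorm.posSMulMono : PosSMulMono ℝ E := by
  refine PosSMulMono.of_smul_nonneg fun c hc x hx => ?_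
  have hq (n : ℕ) : 0 ≤ ((⌊c * n⌋₊ : ℝ) / n) • x := by
    rcases eq_or_ne n 0 with rfl | hn
    · simp
    rw [div_eq_mul_inv, mul_smul, Nat.cast_smul_eq_nsmul]
    refine nsmul_nonneg (nonneg_of_nsmul_nonneg hn ?_) _
    rwa [← Nat.cast_smul_eq_nsmul ℝ, smul_smul, mul_inv_cancel₀ (by exact_mod_cast hn), one_smul]
  have hlim := (tendsto_nat_floor_mul_div_atTop hc).comp tendsto_natCast_atTop_atTop
  exact isClosed_nonneg.mem_of_tendsto (hlim.smul_const x) (Eventually.of_forall hq)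

lemma smul_inf_eq_zero {c : ℝ} {a b : E} (hc : 0 ≤ c) (ha : 0 ≤ a) (hb : 0 ≤ b)
    (hab : a ⊓ b = 0) : c • a ⊓ b = 0 := by
  obtain ⟨n, hn⟩ := exists_nat_ge c
  refine le_antisymm ?_ (le_inf (smul_nonneg hc ha) hb)
  calc c • a ⊓ b ≤ n • a ⊓ b := by
        rw [← Nat.cast_smul_eq_nsmul ℝ]; gcongr
    _ = 0 := nsmul_inf_eq_zero ha hb hab n

lemma posPart_inf_posPart_eq_zero_of_add_smul_nonpos {a b : E} {c : ℝ} (hc : 0 < c)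
    (h : a + c • b ≤ 0) : a⁺ ⊓ b⁺ = 0 := by
  have ha : a⁺ ≤ c • b⁻ := by
    refine sup_le ?_ (smul_nonneg hc.le (negPart_nonneg b))
    calc a ≤ c • -b := by rw [smul_neg]; exact le_neg_iff_add_nonpos_right.2 h
      _ ≤ c • b⁻ := smul_le_smul_of_nonneg_left (neg_le_negPart b) hc.le
  refine le_antisymm ?_ (le_inf (posPart_nonneg a) (posPart_nonneg b))
  calc a⁺ ⊓ b⁺ ≤ c • b⁻ ⊓ b⁺ := inf_le_inf_right _ ha
    _ = 0 := smul_inf_eq_zero hc.le (negPart_nonneg b) (posPart_nonneg b)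
      (by rw [inf_comm, posPart_inf_negPart_eq_zero])

lemma exists_nonneg_forall_le_two_pow_smul [CompleteSpace E] {u : ℕ → E}
    (hu0 : ∀ n, 0 ≤ u n) (hu1 : ∀ n, ‖u n‖ ≤ 1) : ∃ w : E, 0 ≤ w ∧ ∀ n, u n ≤ (2 : ℝ) ^ n • w := by
  have hs : Summable fun k => ((1 : ℝ) / 2) ^ k • u k := by
    refine .of_norm_bounded summable_geometric_two fun k => ?_
    rw [norm_smul, Real.norm_of_nonneg (by positivity)]
    exact mul_le_of_le_one_right (by positivity) (hu1 k)
  have hterm (k : ℕ) : 0 ≤ ((1 : ℝ) / 2) ^ k • u k := smul_nonneg (by positivity) (hu0 k)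
  refine ⟨∑' k, ((1 : ℝ) / 2) ^ k • u k, tsum_nonneg hterm, fun n => ?_⟩
  calc u n = (2 : ℝ) ^ n • ((1 : ℝ) / 2) ^ n • u n := by
        rw [smul_smul, ← mul_pow]; norm_num
    _ ≤ (2 : ℝ) ^ n • ∑' k, ((1 : ℝ) / 2) ^ k • u k :=
        smul_le_smul_of_nonneg_left (hs.le_tsum n fun k _ => hterm k) (by positivity)

-- Continuity makes the additive map `x ↦ p x⁺ - p x⁻` `ℝ`-linear.
lemma StrongDual.exists_eqOn_nonneg (p : E → ℝ)
    (hadd : ∀ x y, 0 ≤ x → 0 ≤ y → p (x + y) = p x + p y)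
    {C : ℝ} (hbd : ∀ x, 0 ≤ x → |p x| ≤ C * ‖x‖) :
    ∃ G : StrongDual ℝ E, ∀ x, 0 ≤ x → G x = p x := by
  have hp0 : p 0 = 0 := by simpa using hadd 0 0 le_rfl le_rfl
  have hsplit (x y : E) : (x + y)⁺ + (x⁻ + y⁻) = (x + y)⁻ + (x⁺ + y⁺) :=
    calc (x + y)⁺ + (x⁻ + y⁻) = ((x + y)⁺ - (x + y)⁻) + (x + y)⁻ + x⁻ + y⁻ := by abel
      _ = (x⁺ - x⁻) + (y⁺ - y⁻) + (x + y)⁻ + x⁻ + y⁻ := by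
          rw [posPart_sub_negPart, posPart_sub_negPart, posPart_sub_negPart]
      _ = (x + y)⁻ + (x⁺ + y⁺) := by abel
  let F : E →+ ℝ := AddMonoidHom.mk' (fun x => p x⁺ - p x⁻) fun x y => by
    have h := congrArg p (hsplit x y)
    rw [hadd _ _ (posPart_nonneg _) (add_nonneg (negPart_nonneg x) (negPart_nonneg y)),
      hadd _ _ (negPart_nonneg x) (negPart_nonneg y),
      hadd _ _ (negPart_nonneg _) (add_nonneg (posPart_nonneg x) (posPart_nonneg y)),
      hadd _ _ (posPart_nonneg x) (posPart_nonneg y)] at h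
    linarith
  have hF (x : E) : ‖F x‖ ≤ 2 * |C| * ‖x‖ := by
    have hC (y : E) (hy : 0 ≤ y) (hyx : ‖y‖ ≤ ‖x‖) : |p y| ≤ |C| * ‖x‖ :=
      (hbd y hy).trans <| (mul_le_mul_of_nonneg_right (le_abs_self C) (norm_nonneg y)).trans
        (mul_le_mul_of_nonneg_left hyx (abs_nonneg C))
    calc ‖F x‖ = |p x⁺ - p x⁻| := rfl
      _ ≤ |p x⁺| + |p x⁻| := abs_sub _ _
      _ ≤ |C| * ‖x‖ + |C| * ‖x‖ :=
          add_le_add (hC _ (posPart_nonneg x) (norm_posPart_le x))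
            (hC _ (negPart_nonneg x) (norm_negPart_le x))
      _ = 2 * |C| * ‖x‖ := by ring
  refine ⟨F.toRealLinearMap (AddMonoidHomClass.continuous_of_bound F _ hF), fun x hx => ?_⟩
  change p x⁺ - p x⁻ = p x
  rw [posPart_eq_self.2 hx, negPart_eq_zero.2 hx, hp0, sub_zero]

end NormedLattice

section PositiveFunctional

variable {E : Type*} [NormedAddCommGroup E] [Lattice E] [IsOrderedAddMonoid E] [NormedSpace ℝ E]

lemma StrongDual.monotone_of_apply_nonneg {g : StrongDual ℝ E} (hg : ∀ z, 0 ≤ z → 0 ≤ g z) :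
    Monotone g := fun y z hyz => by
  simpa using hg (z - y) (sub_nonneg.2 hyz)

lemma StrongDual.abs_apply_le_apply_abs {f g : StrongDual ℝ E}
    (h : ∀ z, 0 ≤ z → |f z| ≤ g z) (x : E) : |f x| ≤ g |x| :=
  calc |f x| = |f x⁺ - f x⁻| := by rw [← map_sub, posPart_sub_negPart]
    _ ≤ |f x⁺| + |f x⁻| := abs_sub _ _
    _ ≤ g x⁺ + g x⁻ := add_le_add (h _ (posPart_nonneg x)) (h _ (negPart_nonneg x))
    _ = g |x| := by rw [← map_add, posPart_add_negPart]

lemma StrongDual.exists_monotone_apply_sum_range_le {ι : Type*} [Preorder ι] [Nonempty ι]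
    [IsDirected ι (· ≤ ·)] {F : ι → StrongDual ℝ E}
    (hF : ∀ z, 0 ≤ z → Tendsto (fun i => F i z) atTop (𝓝 0)) {u : ι → E} (hu : ∀ i, 0 ≤ u i)
    {δ : ℕ → ℝ} (hδ : ∀ n, 0 < δ n) :
    ∃ β : ℕ → ι, Monotone β ∧ ∀ n, F (β n) (∑ k ∈ Finset.range n, u (β k)) ≤ δ n := by
  have hpick (n : ℕ) (i : ι) (s : E) : ∃ j, i ≤ j ∧ (0 ≤ s → F j s ≤ δ n) := by
    by_cases hs : 0 ≤ s
    · obtain ⟨j, hij, hj⟩ :=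
        ((eventually_ge_atTop i).and ((hF s hs).eventually (eventually_le_nhds (hδ n)))).exists
      exact ⟨j, hij, fun _ => hj⟩
    · exact ⟨i, le_rfl, fun h => absurd h hs⟩
  choose pick hpick_le hpick_apply using hpick
  let seq : ℕ → ι × E := fun n => Nat.rec (Classical.arbitrary ι, 0)
    (fun m q => (pick (m + 1) q.1 (q.2 + u q.1), q.2 + u q.1)) n
  have hsum (n : ℕ) : (seq n).2 = ∑ k ∈ Finset.range n, u (seq k).1 := by
    induction n with
    | zero => rfl
    | succ n ih => rw [Finset.sum_range_succ, ← ih]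
  refine ⟨fun n => (seq n).1, monotone_nat_of_le_succ fun n => hpick_le _ _ _, fun n => ?_⟩
  rw [← hsum]
  cases n with
  | zero => exact (map_zero (F (seq 0).1)).trans_le (hδ 0).le
  | succ n =>
    refine hpick_apply _ _ _ (add_nonneg ?_ (hu _))
    rw [hsum]; exact Finset.sum_nonneg fun k _ => hu _

variable [HasSolidNorm E]

lemma StrongDual.exists_nonneg_norm_le_one_lt_apply {f : StrongDual ℝ E}
    (hf : ∀ z, 0 ≤ z → 0 ≤ f z) {r : ℝ} (hr : r < ‖f‖) : ∃ u, 0 ≤ u ∧ ‖u‖ ≤ 1 ∧ r < f u := by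
  obtain ⟨x, hx1, hrx⟩ := f.exists_lt_apply_of_lt_opNorm hr
  refine ⟨|x|, abs_nonneg x, (norm_abs_eq_norm x).trans_le hx1.le, hrx.trans_le ?_⟩
  exact StrongDual.abs_apply_le_apply_abs (fun z hz => (abs_of_nonneg (hf z hz)).le) x

-- `z ↦ lim_k g (z ⊓ k • v)` is the component of `g` in the band generated by `v`; its
-- additivity comes from `(z + w) ⊓ k • v ≤ z ⊓ k • v + w ⊓ k • v ≤ (z + w) ⊓ (2 * k) • v`.
lemma StrongDual.exists_tendsto_apply_inf_nsmul {g : StrongDual ℝ E}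
    (hg : ∀ z, 0 ≤ z → 0 ≤ g z) {v : E} (hv : 0 ≤ v) :
    ∃ G : StrongDual ℝ E, ∀ z, 0 ≤ z → Tendsto (fun k : ℕ => g (z ⊓ k • v)) atTop (𝓝 (G z)) := by
  have hmono := StrongDual.monotone_of_apply_nonneg hg
  have hlim (z : E) (hz : 0 ≤ z) :
      Tendsto (fun k : ℕ => g (z ⊓ k • v)) atTop (𝓝 (⨆ k : ℕ, g (z ⊓ k • v))) :=
    tendsto_atTop_ciSup (fun k l hkl => hmono (inf_le_inf_left z (nsmul_le_nsmul_left hv hkl)))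
      ⟨g z, by rintro _ ⟨k, rfl⟩; exact hmono inf_le_left⟩
  have hadd (z w : E) (hz : 0 ≤ z) (hw : 0 ≤ w) :
      ⨆ k : ℕ, g ((z + w) ⊓ k • v) = (⨆ k : ℕ, g (z ⊓ k • v)) + ⨆ k : ℕ, g (w ⊓ k • v) := by
    have hzw := add_nonneg hz hw
    have hdouble : Tendsto (fun k : ℕ => 2 * k) atTop atTop :=
      tendsto_atTop_atTop.2 fun b => ⟨b, fun k hk => by omega⟩
    refine tendsto_nhds_unique (tendsto_of_tendsto_of_tendsto_of_le_of_le (hlim _ hzw)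
      ((hlim _ hzw).comp hdouble) (fun k => ?_) (fun k => ?_)) ((hlim z hz).add (hlim w hw))
    · calc g ((z + w) ⊓ k • v) ≤ g (z ⊓ k • v + w ⊓ k • v) :=
            hmono (add_inf_le_inf_add_inf hz hw (nsmul_nonneg hv k))
        _ = g (z ⊓ k • v) + g (w ⊓ k • v) := map_add g _ _
    · calc g (z ⊓ k • v) + g (w ⊓ k • v) = g (z ⊓ k • v + w ⊓ k • v) := (map_add g _ _).symm
        _ ≤ g ((z + w) ⊓ (2 * k) • v) := hmono <| le_inf (add_le_add inf_le_left inf_le_left)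
            (by rw [two_mul, add_nsmul]; exact add_le_add inf_le_right inf_le_right)
  have hbd (z : E) (hz : 0 ≤ z) : |⨆ k : ℕ, g (z ⊓ k • v)| ≤ ‖g‖ * ‖z‖ := by
    rw [abs_of_nonneg (ge_of_tendsto' (hlim z hz) fun k => hg _ (le_inf hz (nsmul_nonneg hv k)))]
    exact (le_of_tendsto' (hlim z hz) fun k => hmono inf_le_left).trans
      ((Real.le_norm_self _).trans (g.le_opNorm z))
  obtain ⟨G, hG⟩ := StrongDual.exists_eqOn_nonneg _ hadd hbd
  exact ⟨G, fun z hz => hG z hz ▸ hlim z hz⟩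

end PositiveFunctional

section Disjointification

variable {E : Type*} [NormedAddCommGroup E] [Lattice E] [NormedSpace ℝ E]

noncomputable def disjointify (u : ℕ → E) (w : E) (n : ℕ) : E :=
  (u n - (8 : ℝ) ^ n • ∑ k ∈ Finset.range n, u k - ((1 : ℝ) / 4) ^ n • w)⁺

lemma disjointify_nonneg (u : ℕ → E) (w : E) (n : ℕ) : 0 ≤ disjointify u w n :=
  posPart_nonneg _

variable [IsOrderedAddMonoid E] [HasSolidNorm E]

lemma disjointify_le {u : ℕ → E} (hu0 : ∀ n, 0 ≤ u n) {w : E} (hw0 : 0 ≤ w) (n : ℕ) :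
    disjointify u w n ≤ u n :=
  sup_le ((sub_le_self _ (smul_nonneg (by positivity) hw0)).trans
    (sub_le_self _ (smul_nonneg (by positivity) (Finset.sum_nonneg fun k _ => hu0 k)))) (hu0 n)

lemma disjSeq_disjointify {u : ℕ → E} (hu0 : ∀ n, 0 ≤ u n) {w : E} (hw0 : 0 ≤ w)
    (huw : ∀ n, u n ≤ (2 : ℝ) ^ n • w) : DisjSeq (disjointify u w) := by
  refine disjSeq_of_forall_lt (disjointify_nonneg u w) fun n m hnm => ?_
  set T : ℕ → E := fun n => ∑ k ∈ Finset.range n, u k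
  have hle : disjointify u w n ≤ (u n - ((1 : ℝ) / 4) ^ n • w)⁺ :=
    posPart_mono (sub_le_sub_right (sub_le_self _
      (smul_nonneg (by positivity) (Finset.sum_nonneg fun k _ => hu0 k))) _)
  have hun : u n ≤ T m := Finset.single_le_sum (fun k _ => hu0 k) (Finset.mem_range.2 hnm)
  have hcoef : (2 : ℝ) ^ m ≤ 8 ^ m * (1 / 4) ^ n :=
    calc (2 : ℝ) ^ m = 8 ^ m * (1 / 4) ^ m := by rw [← mul_pow]; norm_num
      _ ≤ 8 ^ m * (1 / 4) ^ n := mul_le_mul_of_nonneg_left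
          (pow_le_pow_of_le_one (by norm_num) (by norm_num) hnm.le) (by positivity)
  have hum : u m ≤ ((8 : ℝ) ^ m * (1 / 4) ^ n) • w :=
    (huw m).trans (smul_le_smul_of_nonneg_right hcoef hw0)
  refine le_antisymm ((inf_le_inf_left _ hle).trans
    (posPart_inf_posPart_eq_zero_of_add_smul_nonpos (c := 8 ^ m) (by positivity) ?_).le)
    (le_inf (posPart_nonneg _) (posPart_nonneg _))
  calc u m - (8 : ℝ) ^ m • T m - ((1 : ℝ) / 4) ^ m • w + (8 : ℝ) ^ m • (u n - ((1 : ℝ) / 4) ^ n • w)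
      = (u m - ((8 : ℝ) ^ m * (1 / 4) ^ n) • w) - (8 : ℝ) ^ m • (T m - u n)
        - ((1 : ℝ) / 4) ^ m • w := by module
    _ ≤ 0 := sub_nonpos.2 <| (sub_le_self _ (smul_nonneg (by positivity) (sub_nonneg.2 hun))).trans
        ((sub_nonpos.2 hum).trans (smul_nonneg (by positivity) hw0))

lemma StrongDual.exists_disjSeq_apply_ge [CompleteSpace E] {φ : ℕ → StrongDual ℝ E}
    (hφ : ∀ n z, 0 ≤ z → 0 ≤ φ n z) {u : ℕ → E} (hu0 : ∀ n, 0 ≤ u n) (hu1 : ∀ n, ‖u n‖ ≤ 1)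
    {δ : ℝ} (hsum : ∀ n, φ n (∑ k ∈ Finset.range n, u k) ≤ δ / 8 ^ n) :
    ∃ w : E, 0 ≤ w ∧ ∃ y : ℕ → E, DisjSeq y ∧ (∀ n, 0 ≤ y n ∧ y n ≤ u n) ∧
      ∀ n, φ n (u n) - δ - (1 / 4) ^ n * φ n w ≤ φ n (y n) := by
  obtain ⟨w, hw0, huw⟩ := exists_nonneg_forall_le_two_pow_smul hu0 hu1
  refine ⟨w, hw0, disjointify u w, disjSeq_disjointify hu0 hw0 huw,
    fun n => ⟨disjointify_nonneg u w n, disjointify_le hu0 hw0 n⟩, fun n => ?_⟩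
  have hsum' : (8 : ℝ) ^ n * φ n (∑ k ∈ Finset.range n, u k) ≤ δ := by
    have := mul_le_mul_of_nonneg_left (hsum n) (by positivity : (0 : ℝ) ≤ 8 ^ n)
    rwa [mul_div_cancel₀ _ (by positivity)] at this
  calc φ n (u n) - δ - (1 / 4) ^ n * φ n w
      ≤ φ n (u n - (8 : ℝ) ^ n • ∑ k ∈ Finset.range n, u k - ((1 : ℝ) / 4) ^ n • w) := by
        simp only [map_sub, map_smul, smul_eq_mul]; linarith
    _ ≤ φ n (disjointify u w n) := StrongDual.monotone_of_apply_nonneg (hφ n) (le_posPart _)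

end Disjointification

section DualLattice

variable {E : Type*} [NormedAddCommGroup E] [Lattice E] [NormedSpace ℝ E]
  [Lattice (StrongDual ℝ E)] [CovariantClass (StrongDual ℝ E) (StrongDual ℝ E) (· + ·) (· ≤ ·)]

lemma StrongDual.le_iff_forall_nonneg_apply_le
    (hE' : ∀ f : StrongDual ℝ E, 0 ≤ f ↔ ∀ x : E, 0 ≤ x → 0 ≤ f x) {f g : StrongDual ℝ E} :
    f ≤ g ↔ ∀ x, 0 ≤ x → f x ≤ g x := by
  rw [← sub_nonneg, hE']
  simp only [sub_apply, sub_nonneg]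

variable [IsOrderedAddMonoid E] [HasSolidNorm E]

lemma StrongDual.exists_isGLB_tendsto_of_antitone
    (hE' : ∀ f : StrongDual ℝ E, 0 ≤ f ↔ ∀ x : E, 0 ≤ x → 0 ≤ f x)
    {ι : Type*} [Preorder ι] [Nonempty ι] [IsDirected ι (· ≤ ·)] {F : ι → StrongDual ℝ E}
    (hF : Antitone F) (hF0 : ∀ i, 0 ≤ F i) :
    ∃ h : StrongDual ℝ E, IsGLB (Set.range F) h ∧
      ∀ z, 0 ≤ z → Tendsto (fun i => F i z) atTop (𝓝 (h z)) := by
  have hle (f g : StrongDual ℝ E) := StrongDual.le_iff_forall_nonneg_apply_le hE' (f := f) (g := g)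
  have hpos (i : ι) := (hE' (F i)).1 (hF0 i)
  have hbdd (z : E) (hz : 0 ≤ z) : BddBelow (Set.range fun i => F i z) :=
    ⟨0, by rintro _ ⟨i, rfl⟩; exact hpos i z hz⟩
  have hlim (z : E) (hz : 0 ≤ z) : Tendsto (fun i => F i z) atTop (𝓝 (⨅ i, F i z)) :=
    tendsto_atTop_ciInf (fun i j hij => (hle _ _).1 (hF hij) z hz) (hbdd z hz)
  have hadd (z w : E) (hz : 0 ≤ z) (hw : 0 ≤ w) :
      ⨅ i, F i (z + w) = (⨅ i, F i z) + ⨅ i, F i w :=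
    tendsto_nhds_unique (hlim _ (add_nonneg hz hw))
      (((hlim z hz).add (hlim w hw)).congr fun i => (map_add _ _ _).symm)
  let i₀ : ι := Classical.arbitrary ι
  have hbd (z : E) (hz : 0 ≤ z) : |⨅ i, F i z| ≤ ‖F i₀‖ * ‖z‖ := by
    rw [abs_of_nonneg (le_ciInf fun i => hpos i z hz)]
    exact (ciInf_le (hbdd z hz) i₀).trans ((Real.le_norm_self _).trans ((F i₀).le_opNorm z))
  obtain ⟨h, hh⟩ := StrongDual.exists_eqOn_nonneg _ hadd hbd
  refine ⟨h, ⟨?_, fun c hc => ?_⟩, fun z hz => hh z hz ▸ hlim z hz⟩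
  · rintro _ ⟨j, rfl⟩
    exact (hle _ _).2 fun z hz => by rw [hh z hz]; exact ciInf_le (hbdd z hz) j
  · exact (hle _ _).2 fun z hz => by
      rw [hh z hz]; exact le_ciInf fun i => (hle _ _).1 (hc ⟨i, rfl⟩) z hz

variable [HasSolidNorm (StrongDual ℝ E)]

lemma StrongDual.tendsto_norm_zero_of_sum_range_le
    (hE' : ∀ f : StrongDual ℝ E, 0 ≤ f ↔ ∀ x : E, 0 ≤ x → 0 ≤ f x)
    (hOC : OrderContinuousNorm (StrongDual ℝ E)) {G : ℕ → StrongDual ℝ E} {g : StrongDual ℝ E}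
    (hG : ∀ n, 0 ≤ G n) (hsum : ∀ n, ∑ k ∈ Finset.range n, G k ≤ g) :
    Tendsto (fun n => ‖G n‖) atTop (𝓝 0) := by
  set D : ℕ → StrongDual ℝ E := fun n => g - ∑ k ∈ Finset.range n, G k
  have hD_succ (n : ℕ) : D (n + 1) = D n - G n := by
    simp only [D, Finset.sum_range_succ]; abel
  have hD : Antitone D := antitone_nat_of_succ_le fun n => by
    rw [hD_succ]; exact sub_le_self _ (hG n)
  obtain ⟨h, hglb, -⟩ := StrongDual.exists_isGLB_tendsto_of_antitone hE' hD
    fun n => sub_nonneg.2 (hsum n)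
  have hDh (n : ℕ) : 0 ≤ D n - h := sub_nonneg.2 (hglb.1 ⟨n, rfl⟩)
  -- `D - h` decreases to `0`; `ULift` moves the index set to the universe `hOC` is stated in.
  have hW : Tendsto (fun n : ULift ℕ => ‖D n.down - h‖) atTop (𝓝 0) := by
    refine hOC (ULift ℕ) _ (fun m n hmn => sub_le_sub_right (hD hmn) h) ⟨?_, fun c hc => ?_⟩
    · rintro _ ⟨n, rfl⟩; exact hDh n.down
    · have : c + h ≤ h := hglb.2 <| by
        rintro _ ⟨n, rfl⟩; exact le_sub_iff_add_le.1 (hc ⟨⟨n⟩, rfl⟩)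
      simpa using this
  have hGW (n : ℕ) : ‖G n‖ ≤ ‖D n - h‖ := by
    refine norm_le_norm_of_abs_le_abs ?_
    rw [abs_of_nonneg (hG n), abs_of_nonneg (hDh n), le_sub_comm, ← hD_succ]
    exact hglb.1 ⟨n + 1, rfl⟩
  exact squeeze_zero (fun n => norm_nonneg _) hGW
    (hW.comp (tendsto_atTop_atTop.2 fun b => ⟨b.down, fun n hn => hn⟩))

end DualLattice

section Characterization

variable {E : Type*} [NormedAddCommGroup E] [Lattice E] [HasSolidNorm E] [IsOrderedAddMonoid E]
  [NormedSpace ℝ E] [Lattice (StrongDual ℝ E)] [HasSolidNorm (StrongDual ℝ E)]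
  [CovariantClass (StrongDual ℝ E) (StrongDual ℝ E) (· + ·) (· ≤ ·)]

lemma StrongDual.tendsto_apply_of_disjoint
    (hE' : ∀ f : StrongDual ℝ E, 0 ≤ f ↔ ∀ x : E, 0 ≤ x → 0 ≤ f x)
    (hOC : OrderContinuousNorm (StrongDual ℝ E)) {g : StrongDual ℝ E} (hg : 0 ≤ g) {v : ℕ → E}
    (hv0 : ∀ n, 0 ≤ v n) (hv1 : ∀ n, ‖v n‖ ≤ 1) (hvd : ∀ m n, m ≠ n → v m ⊓ v n = 0) :
    Tendsto (fun n => g (v n)) atTop (𝓝 0) := by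
  have hgpos := (hE' g).1 hg
  have hmono := StrongDual.monotone_of_apply_nonneg hgpos
  choose G hG using fun n => StrongDual.exists_tendsto_apply_inf_nsmul hgpos (hv0 n)
  have hGpos (n : ℕ) (z : E) (hz : 0 ≤ z) : 0 ≤ G n z :=
    ge_of_tendsto' (hG n z hz) fun k => hgpos _ (le_inf hz (nsmul_nonneg (hv0 n) k))
  have hGv (n : ℕ) : G n (v n) = g (v n) :=
    tendsto_nhds_unique (hG n _ (hv0 n)) <| tendsto_atTop_of_eventually_const (i₀ := 1)
      fun k hk => by rw [inf_eq_left.2 (le_self_nsmul (hv0 n) (by omega))]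
  have hsum (n : ℕ) : ∑ k ∈ Finset.range n, G k ≤ g := by
    refine (StrongDual.le_iff_forall_nonneg_apply_le hE').2 fun z hz => ?_
    rw [sum_apply]
    refine le_of_tendsto' (tendsto_finsetSum _ fun k _ => hG k z hz) fun j => ?_
    rw [← map_sum]
    refine hmono (sum_le_of_pairwise_inf_eq_zero hz (fun k _ => le_inf hz (nsmul_nonneg (hv0 k) j))
      (fun k _ => inf_le_left) fun k _ l _ hkl => le_antisymm ?_ (le_inf (le_inf hz
        (nsmul_nonneg (hv0 k) j)) (le_inf hz (nsmul_nonneg (hv0 l) j))))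
    calc z ⊓ j • v k ⊓ (z ⊓ j • v l) ≤ j • v k ⊓ j • v l := inf_le_inf inf_le_right inf_le_right
      _ = 0 := nsmul_inf_nsmul_eq_zero (hv0 k) (hv0 l) (hvd k l hkl) j j
  have hGnorm := StrongDual.tendsto_norm_zero_of_sum_range_le hE' hOC
    (fun n => (hE' _).2 (hGpos n)) hsum
  refine squeeze_zero (fun n => hgpos _ (hv0 n)) (fun n => ?_) hGnorm
  calc g (v n) = G n (v n) := (hGv n).symm
    _ ≤ ‖G n‖ * ‖v n‖ := (Real.le_norm_self _).trans ((G n).le_opNorm _)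
    _ ≤ ‖G n‖ := mul_le_of_le_one_right (norm_nonneg _) (hv1 n)

lemma StrongDual.tendsto_apply_of_orderContinuousNorm
    (hE' : ∀ f : StrongDual ℝ E, 0 ≤ f ↔ ∀ x : E, 0 ≤ x → 0 ≤ f x)
    (hOC : OrderContinuousNorm (StrongDual ℝ E)) {f : ℕ → StrongDual ℝ E} (hf : OrdBddSeq f)
    {x : ℕ → E} (hx1 : ∀ n, ‖x n‖ ≤ 1) (hxd : DisjSeq x) :
    Tendsto (fun n => f n (x n)) atTop (𝓝 0) := by
  obtain ⟨a, b, hab⟩ := hf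
  have hle (f g : StrongDual ℝ E) := StrongDual.le_iff_forall_nonneg_apply_le hE' (f := f) (g := g)
  set g : StrongDual ℝ E := |a| ⊔ |b|
  have hfg (n : ℕ) (z : E) (hz : 0 ≤ z) : |f n z| ≤ g z := by
    have ha := (hle (-a) g).1 ((neg_le_abs a).trans le_sup_left) z hz
    have hlo := (hle _ _).1 (hab n).1 z hz
    have hhi := (hle (f n) g).1 ((hab n).2.trans ((le_abs_self b).trans le_sup_right)) z hz
    rw [neg_apply] at ha
    exact abs_le.2 ⟨by linarith, hhi⟩
  exact squeeze_zero_norm (fun n => StrongDual.abs_apply_le_apply_abs (hfg n) (x n))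
    (StrongDual.tendsto_apply_of_disjoint hE' hOC
      ((abs_nonneg a).trans le_sup_left) (fun n => abs_nonneg (x n))
      (fun n => (norm_abs_eq_norm (x n)).trans_le (hx1 n)) hxd)

lemma StrongDual.orderContinuousNorm_of_tendsto_apply [CompleteSpace E]
    (hE' : ∀ f : StrongDual ℝ E, 0 ≤ f ↔ ∀ x : E, 0 ≤ x → 0 ≤ f x)
    (h : ∀ f : ℕ → StrongDual ℝ E, OrdBddSeq f → ∀ x : ℕ → E, (∀ n, ‖x n‖ ≤ 1) → DisjSeq x →
      Tendsto (fun n => f n (x n)) atTop (𝓝 0)) :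
    OrderContinuousNorm (StrongDual ℝ E) := by
  intro ι _ _ _ F hF hglb
  have hF0 (i : ι) : 0 ≤ F i := hglb.1 ⟨i, rfl⟩
  have hpos (i : ι) := (hE' (F i)).1 (hF0 i)
  obtain ⟨F₀, hF₀, hlim⟩ := StrongDual.exists_isGLB_tendsto_of_antitone hE' hF hF0
  have hlim0 (z : E) (hz : 0 ≤ z) : Tendsto (fun i => F i z) atTop (𝓝 0) := by
    simpa [← hglb.unique hF₀] using hlim z hz
  have hnorm : Antitone fun i => ‖F i‖ := fun i j hij => norm_le_norm_of_abs_le_abs <| by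
    rw [abs_of_nonneg (hF0 i), abs_of_nonneg (hF0 j)]; exact hF hij
  have hbdd : BddBelow (Set.range fun i => ‖F i‖) := ⟨0, by rintro _ ⟨i, rfl⟩; exact norm_nonneg _⟩
  obtain hε | hε := (le_ciInf fun i => norm_nonneg (F i)).eq_or_lt
  · exact hε ▸ tendsto_atTop_ciInf hnorm hbdd
  set ε := ⨅ i, ‖F i‖
  choose u hu0 hu1 hu using fun i => StrongDual.exists_nonneg_norm_le_one_lt_apply (hpos i)
    ((half_lt_self hε).trans_le (ciInf_le hbdd i))
  obtain ⟨β, hβ, hβsum⟩ := StrongDual.exists_monotone_apply_sum_range_le hlim0 hu0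
    (δ := fun n => ε / 4 / 8 ^ n) fun n => by positivity
  obtain ⟨w, hw0, y, hyd, hy, hlow⟩ := StrongDual.exists_disjSeq_apply_ge (fun n => hpos (β n))
    (fun n => hu0 (β n)) (fun n => hu1 (β n)) hβsum
  have hy1 (n : ℕ) : ‖y n‖ ≤ 1 := (norm_le_norm_of_abs_le_abs (by
    rw [abs_of_nonneg (hy n).1, abs_of_nonneg (hu0 _)]; exact (hy n).2)).trans (hu1 _)
  have hβ0 (n : ℕ) : F (β n) ≤ F (β 0) := hF (hβ (Nat.zero_le n))
  have hy_lim := h (fun n => F (β n)) ⟨0, F (β 0), fun n => ⟨hF0 _, hβ0 n⟩⟩ y hy1 hyd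
  have hlow_lim : Tendsto (fun n : ℕ => ε / 4 - (1 / 4) ^ n * F (β 0) w) atTop (𝓝 (ε / 4)) := by
    have hpow := tendsto_pow_atTop_nhds_zero_of_lt_one (r := (1 : ℝ) / 4) (by norm_num) (by norm_num)
    simpa using tendsto_const_nhds.sub (hpow.mul_const (F (β 0) w))
  have hle : ε / 4 ≤ 0 := le_of_tendsto_of_tendsto' hlow_lim hy_lim fun n => by
    have := (StrongDual.le_iff_forall_nonneg_apply_le hE').1 (hβ0 n) w hw0
    have := mul_le_mul_of_nonneg_left this (by positivity : (0 : ℝ) ≤ (1 / 4) ^ n)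
    linarith [hlow n, hu (β n)]
  linarith

end Characterization

theorem stmt5 {E : Type*} [NormedAddCommGroup E] [Lattice E] [HasSolidNorm E]
    [IsOrderedAddMonoid E] [NormedSpace ℝ E] [CompleteSpace E]
    [Lattice (StrongDual ℝ E)] [HasSolidNorm (StrongDual ℝ E)]
    [CovariantClass (StrongDual ℝ E) (StrongDual ℝ E) (· + ·) (· ≤ ·)]
    (hE' : ∀ f : StrongDual ℝ E, 0 ≤ f ↔ ∀ x : E, 0 ≤ x → 0 ≤ f x) :
    OrderContinuousNorm (StrongDual ℝ E) ↔
      ∀ f : ℕ → StrongDual ℝ E, OrdBddSeq f →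
        ∀ x : ℕ → E, (∀ n, ‖x n‖ ≤ 1) → DisjSeq x →
          Tendsto (fun n => f n (x n)) atTop (𝓝 0) :=
  ⟨fun hOC _ hf _ hx1 hxd => StrongDual.tendsto_apply_of_orderContinuousNorm hE' hOC hf hx1 hxd,
    StrongDual.orderContinuousNorm_of_tendsto_apply hE'⟩
end

section
/- If S, T : E → F are positive operators between Banach lattices with 0 ≤ S ≤ T and T is order L-weakly compact, then S is order L-weakly compact. -/
open Filter Topology NormedSpace

open Filter Topology

theorem SolidHull.subset_of_forall_abs_le {G : Type*} [Lattice G] [AddCommGroup G] {A B : Set G}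
    (h : ∀ a ∈ A, ∃ b ∈ B, |a| ≤ |b|) :
    SolidHull A ⊆ SolidHull B := by
  rintro z ⟨a, ha, hza⟩
  obtain ⟨b, hb, hab⟩ := h a ha
  exact ⟨b, hb, hza.trans hab⟩

theorem LWCompactSet.mono_solidHull {G : Type*} [NormedAddCommGroup G] [Lattice G] {A B : Set G}
    (hB : LWCompactSet B) (hAB : SolidHull A ⊆ SolidHull B) : LWCompactSet A :=
  fun y hy hdisj => hB y (fun n => hAB (hy n)) hdisj

theorem solidHull_image_Icc_subset_of_le {E F : Type*} [NormedAddCommGroup E] [Lattice E]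
    [NormedSpace ℝ E] [NormedAddCommGroup F] [Lattice F] [IsOrderedAddMonoid F] [NormedSpace ℝ F]
    {S T : E →L[ℝ] F} (hS : ∀ x : E, 0 ≤ x → 0 ≤ S x) (hST : ∀ x : E, 0 ≤ x → S x ≤ T x)
    (x : E) : SolidHull (S '' Set.Icc 0 x) ⊆ SolidHull (T '' Set.Icc 0 x) := by
  refine SolidHull.subset_of_forall_abs_le ?_
  rintro _ ⟨u, hu, rfl⟩
  exact ⟨T u, ⟨u, hu, rfl⟩, abs_le_abs_of_nonneg (hS u hu.1) (hST u hu.1)⟩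

theorem stmt6_general {E F : Type*} [NormedAddCommGroup E] [Lattice E] [NormedSpace ℝ E]
    [NormedAddCommGroup F] [Lattice F] [IsOrderedAddMonoid F] [NormedSpace ℝ F]
    (S T : E →L[ℝ] F)
    (hS : ∀ x : E, 0 ≤ x → 0 ≤ S x)
    (hST : ∀ x : E, 0 ≤ x → S x ≤ T x)
    (hT : OrderLWC T) :
    OrderLWC S :=
  fun x hx => (hT x hx).mono_solidHull (solidHull_image_Icc_subset_of_le hS hST x)

theorem stmt6 {E F : Type*} [NormedAddCommGroup E] [Lattice E] [HasSolidNorm E] [IsOrderedAddMonoid E] [NormedSpace ℝ E] [CompleteSpace E]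
    [NormedAddCommGroup F] [Lattice F] [HasSolidNorm F] [IsOrderedAddMonoid F] [NormedSpace ℝ F] [CompleteSpace F]
    (S T : E →L[ℝ] F)
    (hS : ∀ x : E, 0 ≤ x → 0 ≤ S x)
    (hST : ∀ x : E, 0 ≤ x → S x ≤ T x)
    (hT : OrderLWC T) :
    OrderLWC S :=
  stmt6_general S T hS hST hT
end

section
/- If S, T : E → F are positive operators between Banach lattices with 0 ≤ S ≤ T and T is order M-weakly compact, then S is order M-weakly compact. -/
open Filter Topology NormedSpace

open Filter Topology

/-! For `0 ≤ S ≤ T` and any functional `f`, splitting `x = x⁺ - x⁻` gives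
`|f (S x)| ≤ |f| (S |x|) ≤ |f| (T |x|)`. Since `(|x n|)` is again a disjoint sequence in the unit
ball and `(|f n|)` is again order bounded, order M-weak compactness of `T` makes the right-hand
side tend to `0`. -/

theorem DisjSeq.abs {G : Type*} [Lattice G] [AddCommGroup G] [IsOrderedAddMonoid G]
    {y : ℕ → G} (h : DisjSeq y) : DisjSeq (|y ·|) := by
  simpa only [DisjSeq, abs_abs] using h

theorem OrdBddSeq.abs {G : Type*} [Lattice G] [AddCommGroup G] [IsOrderedAddMonoid G]
    {y : ℕ → G} (h : OrdBddSeq y) : OrdBddSeq (|y ·|) := by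
  obtain ⟨a, b, hab⟩ := h
  refine ⟨0, |a| ⊔ |b|, fun n => ⟨abs_nonneg _, abs_le'.mpr ⟨?_, ?_⟩⟩⟩
  · exact ((hab n).2.trans (le_abs_self b)).trans le_sup_right
  · exact ((neg_le_neg (hab n).1).trans (neg_le_abs a)).trans le_sup_left

section PositiveOperators

variable {E F : Type*} [NormedAddCommGroup E] [Lattice E] [IsOrderedAddMonoid E] [NormedSpace ℝ E]
  [NormedAddCommGroup F] [Lattice F] [NormedSpace ℝ F]
  [Lattice (StrongDual ℝ F)] [IsOrderedAddMonoid (StrongDual ℝ F)]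
  (hpos : ∀ g : StrongDual ℝ F, 0 ≤ g → ∀ y : F, 0 ≤ y → 0 ≤ g y)

include hpos

theorem abs_apply_le_abs_apply_of_nonneg (f : StrongDual ℝ F) {y : F} (hy : 0 ≤ y) :
    |f y| ≤ |f| y := by
  have h₁ := hpos _ (sub_nonneg.mpr (le_abs_self f)) y hy
  have h₂ := hpos _ (neg_le_iff_add_nonneg.mp (neg_le_abs f)) y hy
  simp only [sub_apply, add_apply] at h₁ h₂
  exact abs_le.mpr ⟨by linarith, by linarith⟩

theorem abs_apply_map_le_abs_apply_map_abs (S : E →L[ℝ] F) (hS : ∀ x, 0 ≤ x → 0 ≤ S x)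
    (f : StrongDual ℝ F) (x : E) : |f (S x)| ≤ |f| (S |x|) :=
  calc |f (S x)| = |f (S x⁺) - f (S x⁻)| := by rw [← map_sub, ← map_sub, posPart_sub_negPart]
    _ ≤ |f (S x⁺)| + |f (S x⁻)| := abs_sub _ _
    _ ≤ |f| (S x⁺) + |f| (S x⁻) :=
      add_le_add (abs_apply_le_abs_apply_of_nonneg hpos f (hS _ (posPart_nonneg x)))
        (abs_apply_le_abs_apply_of_nonneg hpos f (hS _ (negPart_nonneg x)))
    _ = |f| (S |x|) := by rw [← map_add, ← map_add, posPart_add_negPart]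

theorem abs_apply_map_le_of_le [IsOrderedAddMonoid F] (S T : E →L[ℝ] F)
    (hS : ∀ x, 0 ≤ x → 0 ≤ S x) (hST : ∀ x, 0 ≤ x → S x ≤ T x) (f : StrongDual ℝ F) (x : E) :
    |f (S x)| ≤ |f| (T |x|) := by
  have hmono := hpos |f| (abs_nonneg f) _ (sub_nonneg.mpr (hST |x| (abs_nonneg x)))
  rw [map_sub, sub_nonneg] at hmono
  exact (abs_apply_map_le_abs_apply_map_abs hpos S hS f x).trans hmono

end PositiveOperators

theorem stmt7_general {E F : Type*} [NormedAddCommGroup E] [Lattice E] [HasSolidNorm E] [IsOrderedAddMonoid E] [NormedSpace ℝ E]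
    [NormedAddCommGroup F] [Lattice F] [IsOrderedAddMonoid F] [NormedSpace ℝ F]
    [Lattice (StrongDual ℝ F)]
    [CovariantClass (StrongDual ℝ F) (StrongDual ℝ F) (· + ·) (· ≤ ·)]
    (hF' : ∀ f : StrongDual ℝ F, 0 ≤ f ↔ ∀ y : F, 0 ≤ y → 0 ≤ f y)
    (S T : E →L[ℝ] F)
    (hS : ∀ x : E, 0 ≤ x → 0 ≤ S x)
    (hST : ∀ x : E, 0 ≤ x → S x ≤ T x)
    (hT : OrderMWC T) :
    OrderMWC S := by
  have : IsOrderedAddMonoid (StrongDual ℝ F) := ⟨fun _ _ h c => by gcongr, fun _ _ h c => by gcongr⟩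
  intro x hx hdisj f hf
  have hT_abs : Tendsto (fun n => |f n| (T |x n|)) atTop (𝓝 0) :=
    hT (|x ·|) (fun n => (norm_abs_eq_norm _).trans_le (hx n)) hdisj.abs _ hf.abs
  refine squeeze_zero_norm (fun n => ?_) hT_abs
  exact abs_apply_map_le_of_le (fun g => (hF' g).mp) S T hS hST (f n) (x n)

theorem stmt7 {E F : Type*} [NormedAddCommGroup E] [Lattice E] [HasSolidNorm E] [IsOrderedAddMonoid E] [NormedSpace ℝ E] [CompleteSpace E]
    [NormedAddCommGroup F] [Lattice F] [HasSolidNorm F] [IsOrderedAddMonoid F] [NormedSpace ℝ F] [CompleteSpace F]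
    [Lattice (StrongDual ℝ F)] [HasSolidNorm (StrongDual ℝ F)]
    [CovariantClass (StrongDual ℝ F) (StrongDual ℝ F) (· + ·) (· ≤ ·)]
    (hF' : ∀ f : StrongDual ℝ F, 0 ≤ f ↔ ∀ y : F, 0 ≤ y → 0 ≤ f y)
    (S T : E →L[ℝ] F)
    (hS : ∀ x : E, 0 ≤ x → 0 ≤ S x)
    (hST : ∀ x : E, 0 ≤ x → S x ≤ T x)
    (hT : OrderMWC T) :
    OrderMWC S :=
  stmt7_general hF' S T hS hST hT
end

section
/- The set of all order L-weakly compact operators from E to F is a closed vector subspace of the Banach space L(E, F) of bounded linear operators. -/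
open Filter Topology NormedSpace

open Filter Topology

/-!
Over `ℝ`, the closedness of the positive cone of a normed lattice makes scalar multiplication
order-compatible. The rest is Riesz decomposition: if `|y n| ≤ |p n| + |q n|` along a disjoint
sequence `y`, then `|y n|` splits into disjoint pieces dominated by `|p n|` and `|q n|`. Hence
L-weakly compact sets are stable under sums and scalar multiples, and a set that is uniformly
approximable by L-weakly compact sets is L-weakly compact; the last fact gives closedness in the
operator norm, since `‖T a - S a‖ ≤ ‖T - S‖ ‖x‖` on `[0, x]`.
-/

open scoped Pointwise

section OrderedModule

theorem nonneg_of_two_pow_nsmul_nonneg {α : Type*} [Lattice α] [AddCommGroup α]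
    [IsOrderedAddMonoid α] {a : α} : ∀ {k : ℕ}, 0 ≤ 2 ^ k • a → 0 ≤ a
  | 0, h => by simpa using h
  | k + 1, h => nonneg_of_two_pow_nsmul_nonneg <| nsmul_two_semiclosed <| by
      rwa [← mul_nsmul, ← pow_succ]

-- `⌊c 2^k⌋₊ / 2^k • a` is nonnegative, and these dyadic multiples converge to `c • a`.
instance HasSolidNorm.isOrderedModule {G : Type*} [NormedAddCommGroup G] [Lattice G]
    [IsOrderedAddMonoid G] [HasSolidNorm G] [NormedSpace ℝ G] : IsOrderedModule ℝ G := by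
  refine IsOrderedModule.of_smul_nonneg fun c hc a ha => ?_
  set s : ℕ → ℝ := fun k => (⌊c * 2 ^ k⌋₊ : ℝ) / 2 ^ k
  have hs : Tendsto s atTop (𝓝 c) :=
    (tendsto_nat_floor_mul_div_atTop hc).comp (tendsto_pow_atTop_atTop_of_one_lt one_lt_two)
  have hsa (k : ℕ) : 0 ≤ s k • a := by
    refine nonneg_of_two_pow_nsmul_nonneg (k := k) ?_
    rw [← Nat.cast_smul_eq_nsmul ℝ, smul_smul, Nat.cast_pow, Nat.cast_ofNat,
      mul_div_cancel₀ _ (by positivity), Nat.cast_smul_eq_nsmul]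
    exact nsmul_nonneg ha _
  exact isClosed_nonneg.mem_of_tendsto (hs.smul_const a) (Eventually.of_forall hsa)

variable {𝕜 M : Type*} [Field 𝕜] [LinearOrder 𝕜] [IsStrictOrderedRing 𝕜]
  [Lattice M] [AddCommGroup M] [Module 𝕜 M] [PosSMulMono 𝕜 M]

theorem smul_inf_of_nonneg {c : 𝕜} (hc : 0 ≤ c) (a b : M) : c • (a ⊓ b) = c • a ⊓ c • b := by
  rcases hc.eq_or_lt with rfl | hc
  · simp
  · exact (OrderIso.smulRight hc).map_inf a b

theorem smul_sup_of_nonneg {c : 𝕜} (hc : 0 ≤ c) (a b : M) : c • (a ⊔ b) = c • a ⊔ c • b := by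
  rcases hc.eq_or_lt with rfl | hc
  · simp
  · exact (OrderIso.smulRight hc).map_sup a b

theorem abs_smul' (c : 𝕜) (a : M) : |c • a| = |c| • |a| := by
  wlog hc : 0 ≤ c generalizing c a
  · simpa [abs_neg] using this (-c) (-a) (neg_nonneg.2 (le_of_not_ge hc))
  rw [abs_of_nonneg hc, abs, abs, smul_sup_of_nonneg hc, smul_neg]

end OrderedModule

section LWCompact

variable {G : Type*} [NormedAddCommGroup G] [Lattice G]

theorem SolidHull.mono {A B : Set G} (hAB : A ⊆ B) : SolidHull A ⊆ SolidHull B :=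
  fun _ ⟨a, ha, hza⟩ => ⟨a, hAB ha, hza⟩

theorem LWCompactSet.mono {A B : Set G} (hB : LWCompactSet B) (hAB : A ⊆ B) : LWCompactSet A :=
  fun y hy => hB y fun n => SolidHull.mono hAB (hy n)

theorem lwCompactSet_singleton_zero [HasSolidNorm G] : LWCompactSet ({0} : Set G) := by
  intro y hy _
  have hy0 (n : ℕ) : ‖y n‖ = 0 := by
    obtain ⟨_, rfl, hyn⟩ := hy n
    simpa using norm_le_norm_of_abs_le_abs hyn
  simp [hy0]

variable [IsOrderedAddMonoid G]

theorem DisjSeq.of_abs_le {y w : ℕ → G} (hy : DisjSeq y) (hwy : ∀ n, |w n| ≤ |y n|) :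
    DisjSeq w := fun m n hmn =>
  le_antisymm ((inf_le_inf (hwy m) (hwy n)).trans (hy m n hmn).le)
    (le_inf (abs_nonneg _) (abs_nonneg _))

variable [HasSolidNorm G]

theorem DisjSeq.smul [NormedSpace ℝ G] {y : ℕ → G} (hy : DisjSeq y) (c : ℝ) :
    DisjSeq (c • y) := fun m n hmn => by
  simp only [Pi.smul_apply, abs_smul', ← smul_inf_of_nonneg (abs_nonneg c), hy m n hmn, smul_zero]

theorem DisjSeq.exists_split {y p q : ℕ → G} (hy : DisjSeq y)
    (hpq : ∀ n, |y n| ≤ |p n| + |q n|) :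
    ∃ u v : ℕ → G, DisjSeq u ∧ DisjSeq v ∧ (∀ n, |u n| ≤ |p n|) ∧ (∀ n, |v n| ≤ |q n|) ∧
      ∀ n, ‖y n‖ ≤ ‖u n‖ + ‖v n‖ := by
  set u : ℕ → G := fun n => |y n| ⊓ |p n|
  set v : ℕ → G := fun n => |y n| - u n
  have hu0 (n : ℕ) : 0 ≤ u n := le_inf (abs_nonneg _) (abs_nonneg _)
  have hv0 (n : ℕ) : 0 ≤ v n := sub_nonneg.2 inf_le_left
  have huy (n : ℕ) : |u n| ≤ |y n| := by rw [abs_of_nonneg (hu0 n)]; exact inf_le_left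
  have hvy (n : ℕ) : |v n| ≤ |y n| := by
    rw [abs_of_nonneg (hv0 n)]; exact sub_le_self _ (hu0 n)
  refine ⟨u, v, hy.of_abs_le huy, hy.of_abs_le hvy, fun n => ?_, fun n => ?_, fun n => ?_⟩
  · rw [abs_of_nonneg (hu0 n)]; exact inf_le_right
  · rw [abs_of_nonneg (hv0 n)]
    simp only [v, u, sub_inf, sub_self]
    exact sup_le (abs_nonneg _) (sub_le_iff_le_add'.2 (hpq n))
  · rw [← norm_abs_eq_norm (y n), ← sub_add_cancel |y n| (u n), add_comm]
    exact norm_add_le _ _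

theorem LWCompactSet.add {A B : Set G} (hA : LWCompactSet A) (hB : LWCompactSet B) :
    LWCompactSet (A + B) := by
  intro y hy hd
  choose c hc hyc using hy
  choose a ha b hb hab using hc
  obtain ⟨u, v, hu, hv, hup, hvq, hyuv⟩ := hd.exists_split (p := a) (q := b)
    fun n => (hyc n).trans (hab n ▸ abs_add_le _ _)
  have hu0 := hA u (fun n => ⟨a n, ha n, hup n⟩) hu
  have hv0 := hB v (fun n => ⟨b n, hb n, hvq n⟩) hv
  exact squeeze_zero (fun n => norm_nonneg _) hyuv (by simpa using hu0.add hv0)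

theorem LWCompactSet.smul [NormedSpace ℝ G] {A : Set G} (hA : LWCompactSet A) (c : ℝ) :
    LWCompactSet (c • A) := by
  rcases eq_or_ne c 0 with rfl | hc
  · exact lwCompactSet_singleton_zero.mono (Set.zero_smul_set_subset A)
  intro y hy hd
  have hcy : ∀ n, c⁻¹ • y n ∈ SolidHull A := by
    intro n
    obtain ⟨_, ⟨a, ha, rfl⟩, hya⟩ := hy n
    refine ⟨a, ha, ?_⟩
    rw [abs_smul', abs_inv, inv_smul_le_iff_of_pos (abs_pos.2 hc), ← abs_smul']
    exact hya
  have := (hA _ hcy (hd.smul c⁻¹)).const_mul |c|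
  simpa [norm_smul, ← mul_assoc, hc] using this

theorem LWCompactSet.of_forall_approx {A : Set G}
    (h : ∀ ε > 0, ∃ B, LWCompactSet B ∧ ∀ a ∈ A, ∃ b ∈ B, ‖a - b‖ ≤ ε) : LWCompactSet A := by
  intro y hy hd
  refine tendsto_order.2 ⟨fun r hr => Eventually.of_forall fun n => hr.trans_le (norm_nonneg _),
    fun ε hε => ?_⟩
  obtain ⟨B, hB, hAB⟩ := h (ε / 2) (half_pos hε)
  choose a ha hya using hy
  choose b hb hab using fun n => hAB (a n) (ha n)
  obtain ⟨u, v, hu, hv, hup, hvq, hyuv⟩ := hd.exists_split (p := b) (q := fun n => a n - b n)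
    fun n => (hya n).trans (by simpa using abs_add_le (b n) (a n - b n))
  have hu0 := hB u (fun n => ⟨b n, hb n, hup n⟩) hu
  filter_upwards [(tendsto_order.1 hu0).2 (ε / 2) (half_pos hε)] with n hn
  calc ‖y n‖ ≤ ‖u n‖ + ‖v n‖ := hyuv n
    _ < ε / 2 + ε / 2 :=
      add_lt_add_of_lt_of_le hn ((norm_le_norm_of_abs_le_abs (hvq n)).trans (hab n))
    _ = ε := add_halves ε

end LWCompact

section OrderLWC

variable {E F : Type*} [NormedAddCommGroup E] [Lattice E] [NormedSpace ℝ E]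
  [NormedAddCommGroup F] [Lattice F] [HasSolidNorm F] [NormedSpace ℝ F]

theorem orderLWC_zero : OrderLWC (0 : E →L[ℝ] F) := fun x _ =>
  lwCompactSet_singleton_zero.mono (by rintro _ ⟨a, -, rfl⟩; rfl)

variable [IsOrderedAddMonoid F]

theorem OrderLWC.add {S T : E →L[ℝ] F} (hS : OrderLWC S) (hT : OrderLWC T) :
    OrderLWC (S + T) := fun x hx =>
  ((hS x hx).add (hT x hx)).mono <| by
    rintro _ ⟨a, ha, rfl⟩
    exact Set.add_mem_add ⟨a, ha, rfl⟩ ⟨a, ha, rfl⟩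

theorem OrderLWC.smul {T : E →L[ℝ] F} (hT : OrderLWC T) (c : ℝ) : OrderLWC (c • T) :=
  fun x hx => ((hT x hx).smul c).mono <| by
    rintro _ ⟨a, ha, rfl⟩
    exact Set.smul_mem_smul_set ⟨a, ha, rfl⟩

theorem isClosed_setOf_orderLWC [IsOrderedAddMonoid E] [HasSolidNorm E] :
    IsClosed {T : E →L[ℝ] F | OrderLWC T} := by
  refine isClosed_of_closure_subset fun T hT x hx => LWCompactSet.of_forall_approx fun ε hε => ?_
  obtain ⟨S, hS, hTS⟩ := Metric.mem_closure_iff.1 hT (ε / (‖x‖ + 1)) (by positivity)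
  refine ⟨S '' Set.Icc 0 x, hS x hx, ?_⟩
  rintro _ ⟨a, ha, rfl⟩
  refine ⟨S a, ⟨a, ha, rfl⟩, ?_⟩
  have hax : ‖a‖ ≤ ‖x‖ :=
    norm_le_norm_of_abs_le_abs (by rw [abs_of_nonneg ha.1, abs_of_nonneg hx]; exact ha.2)
  calc ‖T a - S a‖ = ‖(T - S) a‖ := rfl
    _ ≤ ‖T - S‖ * ‖a‖ := (T - S).le_opNorm a
    _ ≤ ε / (‖x‖ + 1) * (‖x‖ + 1) := by
      rw [← dist_eq_norm]
      gcongr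
      linarith
    _ = ε := div_mul_cancel₀ ε (by positivity)

end OrderLWC

theorem stmt8_general {E F : Type*} [NormedAddCommGroup E] [Lattice E] [IsOrderedAddMonoid E] [HasSolidNorm E] [NormedSpace ℝ E]
    [NormedAddCommGroup F] [Lattice F] [IsOrderedAddMonoid F] [HasSolidNorm F] [NormedSpace ℝ F] :
    IsClosed {T : E →L[ℝ] F | OrderLWC T} ∧
    OrderLWC (0 : E →L[ℝ] F) ∧
    (∀ S T : E →L[ℝ] F, OrderLWC S → OrderLWC T → OrderLWC (S + T)) ∧
    (∀ (c : ℝ) (T : E →L[ℝ] F), OrderLWC T → OrderLWC (c • T)) :=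
  ⟨isClosed_setOf_orderLWC, orderLWC_zero, fun _ _ => OrderLWC.add, fun c _ hT => hT.smul c⟩

theorem stmt8 {E F : Type*} [NormedAddCommGroup E] [Lattice E] [IsOrderedAddMonoid E] [HasSolidNorm E] [NormedSpace ℝ E] [CompleteSpace E]
    [NormedAddCommGroup F] [Lattice F] [IsOrderedAddMonoid F] [HasSolidNorm F] [NormedSpace ℝ F] [CompleteSpace F] :
    IsClosed {T : E →L[ℝ] F | OrderLWC T} ∧
    OrderLWC (0 : E →L[ℝ] F) ∧
    (∀ S T : E →L[ℝ] F, OrderLWC S → OrderLWC T → OrderLWC (S + T)) ∧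
    (∀ (c : ℝ) (T : E →L[ℝ] F), OrderLWC T → OrderLWC (c • T)) :=
  stmt8_general
end

section
/- The set of all order M-weakly compact operators from E to F is a closed vector subspace of the Banach space L(E, F) of bounded linear operators. -/
open Filter Topology NormedSpace

open Filter Topology

/-! The linear structure is inherited pointwise from limits of real sequences. For closedness,
fix a disjoint sequence `x` in the unit ball and an order bounded `f`; since the norm of the dual
is solid, `f` is norm bounded, so the functionals `T ↦ f n (T (x n))` are equicontinuous and the
set of `T` along which they tend to `0` is closed. The order M-weakly compact operators form the
intersection of these closed sets. -/

theorem OrdBddSeq.exists_norm_le {α : Type*} [NormedAddCommGroup α] [Lattice α] [HasSolidNorm α]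
    [CovariantClass α α (· + ·) (· ≤ ·)] {y : ℕ → α} (hy : OrdBddSeq y) :
    ∃ C, ∀ n, ‖y n‖ ≤ C := by
  obtain ⟨a, b, hab⟩ := hy
  refine ⟨‖|a| + |b|‖, fun n => HasSolidNorm.solid ?_⟩
  rw [abs_of_nonneg (add_nonneg (abs_nonneg a) (abs_nonneg b))]
  refine abs_le'.2 ⟨?_, ?_⟩
  · calc y n ≤ b := (hab n).2
      _ ≤ |b| := le_abs_self b
      _ ≤ |a| + |b| := le_add_of_nonneg_left (abs_nonneg a)
  · calc -y n ≤ -a := neg_le_neg_iff.2 (hab n).1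
      _ ≤ |a| := (le_abs_self (-a)).trans_eq (abs_neg a)
      _ ≤ |a| + |b| := le_add_of_nonneg_right (abs_nonneg b)

theorem equicontinuous_dual_apply_apply {𝕜 X Y ι : Type*} [NontriviallyNormedField 𝕜]
    [NormedAddCommGroup X] [NormedSpace 𝕜 X] [NormedAddCommGroup Y] [NormedSpace 𝕜 Y]
    {x : ι → X} {f : ι → StrongDual 𝕜 Y} {a b : ℝ} (hx : ∀ i, ‖x i‖ ≤ a) (hf : ∀ i, ‖f i‖ ≤ b) :
    Equicontinuous fun i (T : X →L[𝕜] Y) => f i (T (x i)) := by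
  let φ : ι → (X →L[𝕜] Y) →L[𝕜] 𝕜 := fun i => (f i).comp (ContinuousLinearMap.apply 𝕜 Y (x i))
  refine ((NormedSpace.equicontinuous_TFAE φ).out 3 1).mp ?_
  refine ⟨b * a, fun i T => ?_⟩
  calc ‖f i (T (x i))‖ ≤ ‖f i‖ * (‖T‖ * ‖x i‖) := (f i).le_opNorm_of_le (T.le_opNorm (x i))
    _ ≤ b * (‖T‖ * a) := by
      gcongr
      exacts [(norm_nonneg _).trans (hf i), hf i, hx i]
    _ = b * a * ‖T‖ := by ring

section OrderMWC

variable {E F : Type*} [NormedAddCommGroup E] [Lattice E] [NormedSpace ℝ E]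
  [NormedAddCommGroup F] [NormedSpace ℝ F] [Lattice (StrongDual ℝ F)]

variable (E F) in
def orderMWCSubmodule : Submodule ℝ (E →L[ℝ] F) where
  carrier := {T | OrderMWC T}
  zero_mem' _ _ _ _ _ := by simp
  add_mem' hS hT x hx hd f hf := by simpa using (hS x hx hd f hf).add (hT x hx hd f hf)
  smul_mem' c _ hT x hx hd f hf := by simpa using (hT x hx hd f hf).const_mul c

theorem isClosed_setOf_orderMWC [HasSolidNorm (StrongDual ℝ F)]
    [CovariantClass (StrongDual ℝ F) (StrongDual ℝ F) (· + ·) (· ≤ ·)] :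
    IsClosed {T : E →L[ℝ] F | OrderMWC T} := by
  simp only [OrderMWC, Set.ofPred_forall]
  refine isClosed_iInter fun x => isClosed_iInter fun hx => isClosed_iInter fun _ =>
    isClosed_iInter fun f => isClosed_iInter fun hf => ?_
  obtain ⟨C, hC⟩ := hf.exists_norm_le
  exact (equicontinuous_dual_apply_apply hx hC).isClosed_setOfPred_tendsto continuous_const

end OrderMWC

theorem stmt9_general {E F : Type*} [NormedAddCommGroup E] [Lattice E] [NormedSpace ℝ E]
    [NormedAddCommGroup F] [NormedSpace ℝ F]
    [Lattice (StrongDual ℝ F)] [HasSolidNorm (StrongDual ℝ F)]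
    [CovariantClass (StrongDual ℝ F) (StrongDual ℝ F) (· + ·) (· ≤ ·)] :
    IsClosed {T : E →L[ℝ] F | OrderMWC T} ∧
    OrderMWC (0 : E →L[ℝ] F) ∧
    (∀ S T : E →L[ℝ] F, OrderMWC S → OrderMWC T → OrderMWC (S + T)) ∧
    (∀ (c : ℝ) (T : E →L[ℝ] F), OrderMWC T → OrderMWC (c • T)) :=
  ⟨isClosed_setOf_orderMWC, (orderMWCSubmodule E F).zero_mem,
    fun _ _ => (orderMWCSubmodule E F).add_mem, fun c _ => (orderMWCSubmodule E F).smul_mem c⟩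

theorem stmt9 {E F : Type*} [NormedAddCommGroup E] [Lattice E] [IsOrderedAddMonoid E]
    [HasSolidNorm E] [NormedSpace ℝ E] [CompleteSpace E]
    [NormedAddCommGroup F] [Lattice F] [IsOrderedAddMonoid F] [HasSolidNorm F] [NormedSpace ℝ F] [CompleteSpace F]
    [Lattice (StrongDual ℝ F)] [HasSolidNorm (StrongDual ℝ F)]
    [CovariantClass (StrongDual ℝ F) (StrongDual ℝ F) (· + ·) (· ≤ ·)]
    (hF' : ∀ f : StrongDual ℝ F, 0 ≤ f ↔ ∀ y : F, 0 ≤ y → 0 ≤ f y) :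
    IsClosed {T : E →L[ℝ] F | OrderMWC T} ∧
    OrderMWC (0 : E →L[ℝ] F) ∧
    (∀ S T : E →L[ℝ] F, OrderMWC S → OrderMWC T → OrderMWC (S + T)) ∧
    (∀ (c : ℝ) (T : E →L[ℝ] F), OrderMWC T → OrderMWC (c • T)) :=
  stmt9_general
end

section
/- If T : E → F is an operator between Banach lattices whose adjoint T' : F' → E' is order M-weakly compact, then T is order L-weakly compact. -/
open Filter Topology NormedSpace

open Filter Topology

/-!
Let `(y n)` be disjoint with `|y n| ≤ |T (u n)|` and `0 ≤ u n ≤ x`. Take norming functionals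
`f n` of `y n` and let `G n` be the component of `|f n|` in the band of `F'` carried by `|y n|`;
disjointness of the `y n` makes the `G n` disjoint. With `P n` the component of `G n` in the band
carried by `(T (u n))⁺`, the functionals `h n = 2 P n - G n` are disjoint, lie in the unit ball, and
satisfy `‖y n‖ ≤ G n |T (u n)| = h n (T (u n)) = (T' (h n)) (u n)`; the right-hand side tends
to `0` because `(u n)` is order bounded in `E''`.
-/

section LatticeOrderedGroup

variable {α : Type*} [Lattice α] [AddCommGroup α] [AddLeftMono α]

lemma inf_add_le_inf_add_inf {a b c : α} (ha : 0 ≤ a) (hb : 0 ≤ b) (hc : 0 ≤ c) :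
    a ⊓ (b + c) ≤ a ⊓ b + a ⊓ c := by
  set d := a ⊓ (b + c)
  have hda : d ≤ a := inf_le_left
  have hdbc : d ≤ b + c := inf_le_right
  have hsub : d - a ⊓ b = (d - a) ⊔ (d - b) := by
    rw [sub_eq_add_neg, neg_inf, add_sup, ← sub_eq_add_neg, ← sub_eq_add_neg]
  have hle : d - a ⊓ b ≤ a ⊓ c := by
    rw [hsub]
    refine sup_le (le_inf ((sub_nonpos.mpr hda).trans ha) ((sub_nonpos.mpr hda).trans hc))
      (le_inf ?_ ?_)
    · exact sub_le_iff_le_add.mpr (hda.trans (le_add_of_nonneg_right hb))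
    · exact sub_le_iff_le_add.mpr (by rwa [add_comm] at hdbc)
  calc d = (d - a ⊓ b) + a ⊓ b := by abel
    _ ≤ a ⊓ c + a ⊓ b := add_le_add_left hle _
    _ = a ⊓ b + a ⊓ c := add_comm _ _

lemma inf_nsmul_eq_zero {a b : α} (ha : 0 ≤ a) (hb : 0 ≤ b) (hab : a ⊓ b = 0) (k : ℕ) :
    a ⊓ k • b = 0 := by
  induction k with
  | zero => simpa using inf_eq_right.mpr ha
  | succ k ih =>
    refine le_antisymm ?_ (le_inf ha (nsmul_nonneg hb _))
    calc a ⊓ (k + 1) • b ≤ a ⊓ k • b + a ⊓ b := by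
          rw [succ_nsmul]; exact inf_add_le_inf_add_inf ha (nsmul_nonneg hb k) hb
      _ = 0 := by rw [ih, hab, add_zero]

lemma sub_inf_inf {y s t : α} (ht : 0 ≤ t) :
    (y - y ⊓ s) ⊓ t = y ⊓ (s + t) - y ⊓ s := by
  refine eq_sub_of_add_eq ?_
  rw [inf_add, sub_add_cancel, add_inf, ← inf_assoc,
    inf_eq_left.mpr (le_add_of_nonneg_left ht), add_comm]

end LatticeOrderedGroup

section BandPart

variable {α : Type*} [Lattice α] [AddCommGroup α] {𝓕 : Type*} [FunLike 𝓕 α ℝ]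

/-- On the positive cone, `g` evaluated on the component along the band generated by `e` (whenever
that band projection exists): additive, equal to `g` at `e`, and zero on elements disjoint from `e`. -/
noncomputable def bandPart (g : 𝓕) (e z : α) : ℝ := ⨆ j : ℕ, g (z ⊓ j • e)

variable {g : 𝓕}

lemma bddAbove_range_apply_inf_nsmul (hg : Monotone g) (e z : α) :
    BddAbove (Set.range fun j : ℕ => g (z ⊓ j • e)) :=
  ⟨g z, by rintro _ ⟨j, rfl⟩; exact hg inf_le_left⟩

lemma le_bandPart (hg : Monotone g) (e z : α) (j : ℕ) : g (z ⊓ j • e) ≤ bandPart g e z :=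
  le_ciSup (bddAbove_range_apply_inf_nsmul hg e z) j

lemma bandPart_le (hg : Monotone g) (e z : α) : bandPart g e z ≤ g z :=
  ciSup_le fun _ => hg inf_le_left

lemma bandPart_self (hg : Monotone g) {e : α} : bandPart g e e = g e :=
  le_antisymm (bandPart_le hg e e) (by simpa using le_bandPart hg e e 1)

variable [AddMonoidHomClass 𝓕 α ℝ]

lemma bandPart_nonneg (hg : Monotone g) (e : α) {z : α} (hz : 0 ≤ z) : 0 ≤ bandPart g e z := by
  simpa [inf_eq_right.mpr hz] using le_bandPart hg e z 0

variable [AddLeftMono α]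

lemma bandPart_eq_zero_of_inf_eq_zero {e z : α} (he : 0 ≤ e) (hz : 0 ≤ z) (hze : z ⊓ e = 0) :
    bandPart g e z = 0 := by
  simp [bandPart, inf_nsmul_eq_zero hz he hze]

lemma bandPart_add (hg : Monotone g) {e u v : α} (he : 0 ≤ e) (hu : 0 ≤ u) (hv : 0 ≤ v) :
    bandPart g e (u + v) = bandPart g e u + bandPart g e v := by
  refine le_antisymm (ciSup_le fun j => ?_) ?_
  · have hsplit : (u + v) ⊓ j • e ≤ u ⊓ j • e + v ⊓ j • e := by
      simpa only [inf_comm (j • e)] using inf_add_le_inf_add_inf (nsmul_nonneg he j) hu hv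
    calc g ((u + v) ⊓ j • e) ≤ g (u ⊓ j • e) + g (v ⊓ j • e) := map_add g _ _ ▸ hg hsplit
      _ ≤ bandPart g e u + bandPart g e v :=
        add_le_add (le_bandPart hg e u j) (le_bandPart hg e v j)
  · have hsum : ∀ j k : ℕ, g (u ⊓ j • e) + g (v ⊓ k • e) ≤ bandPart g e (u + v) := fun j k =>
      calc g (u ⊓ j • e) + g (v ⊓ k • e) = g (u ⊓ j • e + v ⊓ k • e) := (map_add g _ _).symm
        _ ≤ g ((u + v) ⊓ (j + k) • e) := hg <| le_inf (add_le_add inf_le_left inf_le_left)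
            (add_nsmul e j k ▸ add_le_add inf_le_right inf_le_right)
        _ ≤ bandPart g e (u + v) := le_bandPart hg e (u + v) (j + k)
    rw [← le_sub_iff_add_le]
    refine ciSup_le fun j => ?_
    rw [le_sub_comm]
    exact ciSup_le fun k => le_sub_comm.mp (le_sub_iff_add_le.mpr (hsum j k))

lemma bandPart_sub_inf_nsmul_le (hg : Monotone g) {e : α} (he : 0 ≤ e) (y : α) (k : ℕ) :
    bandPart g e (y - y ⊓ k • e) ≤ bandPart g e y - g (y ⊓ k • e) :=
  ciSup_le fun j => by
    rw [sub_inf_inf (nsmul_nonneg he j), ← add_nsmul, map_sub]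
    exact sub_le_sub_right (le_bandPart hg e y (k + j)) _

/-- Write `y = y ⊓ k • e₂ + (y - y ⊓ k • e₂)`: the first bound kills the first piece, and the
second bounds the second piece by a quantity that tends to `0` as `k → ∞`. -/
lemma apply_nonpos_of_le_bandPart {𝓖 : Type*} [FunLike 𝓖 α ℝ] [AddMonoidHomClass 𝓖 α ℝ]
    {g₁ g₂ : 𝓕} (hg₂ : Monotone g₂) {e₁ e₂ : α} (he₁ : 0 ≤ e₁) (he₂ : 0 ≤ e₂)
    (he : e₁ ⊓ e₂ = 0) {w : 𝓖} (hw₁ : ∀ z, 0 ≤ z → w z ≤ bandPart g₁ e₁ z)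
    (hw₂ : ∀ z, 0 ≤ z → w z ≤ bandPart g₂ e₂ z) {y : α} (hy : 0 ≤ y) : w y ≤ 0 := by
  have hstep : ∀ k : ℕ, g₂ (y ⊓ k • e₂) ≤ bandPart g₂ e₂ y - w y := fun k => by
    have hk : 0 ≤ y ⊓ k • e₂ := le_inf hy (nsmul_nonneg he₂ k)
    have hdisj : (y ⊓ k • e₂) ⊓ e₁ = 0 := by
      refine le_antisymm ?_ (le_inf hk he₁)
      rw [inf_comm, ← inf_nsmul_eq_zero he₁ he₂ he k]
      exact inf_le_inf_left _ inf_le_right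
    have h₁ : w (y ⊓ k • e₂) ≤ 0 :=
      (hw₁ _ hk).trans_eq (bandPart_eq_zero_of_inf_eq_zero he₁ hk hdisj)
    have h₂ := (hw₂ _ (sub_nonneg.mpr inf_le_left)).trans
      (bandPart_sub_inf_nsmul_le hg₂ he₂ y k)
    have hsplit : w y = w (y ⊓ k • e₂) + w (y - y ⊓ k • e₂) := by
      rw [← map_add, add_sub_cancel]
    linarith
  have hsup : bandPart g₂ e₂ y ≤ bandPart g₂ e₂ y - w y := ciSup_le hstep
  linarith

lemma two_mul_apply_sub_apply_eq_apply_abs {G P : 𝓕} (hG : Monotone G) {w : α}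
    (hP : ∀ z, 0 ≤ z → P z = bandPart G w⁺ z) : 2 * P w - G w = G |w| := by
  have hPpos : P w⁺ = G w⁺ := by rw [hP _ (posPart_nonneg w), bandPart_self hG]
  have hPneg : P w⁻ = 0 := by
    rw [hP _ (negPart_nonneg w), bandPart_eq_zero_of_inf_eq_zero (posPart_nonneg w)
      (negPart_nonneg w) (by rw [inf_comm, posPart_inf_negPart_eq_zero])]
  rw [← posPart_add_negPart w, map_add]
  conv_lhs => rw [← posPart_sub_negPart w]
  rw [map_sub, map_sub, hPpos, hPneg]
  ring

end BandPart

section NormedLattice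

variable {α : Type*} [NormedAddCommGroup α] [Lattice α] [HasSolidNorm α] [IsOrderedAddMonoid α]

lemma norm_posPart_le_s11 (z : α) : ‖z⁺‖ ≤ ‖z‖ :=
  HasSolidNorm.solid <| by
    rw [abs_of_nonneg (posPart_nonneg z), ← posPart_add_negPart]
    exact le_add_of_nonneg_right (negPart_nonneg z)

lemma norm_negPart_le_s11 (z : α) : ‖z⁻‖ ≤ ‖z‖ :=
  HasSolidNorm.solid <| by
    rw [abs_of_nonneg (negPart_nonneg z), ← posPart_add_negPart]
    exact le_add_of_nonneg_left (posPart_nonneg z)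

lemma exists_strongDual_eq_of_nonneg [NormedSpace ℝ α] (φ : α → ℝ) (C : ℝ)
    (hadd : ∀ u v, 0 ≤ u → 0 ≤ v → φ (u + v) = φ u + φ v)
    (hbound : ∀ z, 0 ≤ z → 0 ≤ φ z ∧ φ z ≤ C * ‖z‖) :
    ∃ p : StrongDual ℝ α, ∀ z, 0 ≤ z → p z = φ z := by
  have hzero : φ 0 = 0 := by simpa using hadd 0 0 le_rfl le_rfl
  let q : α →+ ℝ := AddMonoidHom.mk' (fun z => φ z⁺ - φ z⁻) fun z w => by
    have hid : (z + w)⁺ + (z⁻ + w⁻) = (z + w)⁻ + (z⁺ + w⁺) := by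
      rw [eq_add_of_sub_eq (posPart_sub_negPart (z + w)), eq_add_of_sub_eq (posPart_sub_negPart z),
        eq_add_of_sub_eq (posPart_sub_negPart w)]
      abel
    have := congrArg φ hid
    rw [hadd _ _ (posPart_nonneg _) (add_nonneg (negPart_nonneg _) (negPart_nonneg _)),
      hadd _ _ (negPart_nonneg _) (add_nonneg (posPart_nonneg _) (posPart_nonneg _)),
      hadd _ _ (negPart_nonneg _) (negPart_nonneg _),
      hadd _ _ (posPart_nonneg _) (posPart_nonneg _)] at this
    linarith
  have hq : ∀ z, ‖q z‖ ≤ max C 0 * ‖z‖ := fun z => by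
    obtain ⟨h₁, h₂⟩ := hbound _ (posPart_nonneg z)
    obtain ⟨h₃, h₄⟩ := hbound _ (negPart_nonneg z)
    have h₅ : C * ‖z⁺‖ ≤ max C 0 * ‖z‖ := mul_le_mul (le_max_left _ _) (norm_posPart_le_s11 z)
      (norm_nonneg _) (le_max_right _ _)
    have h₆ : C * ‖z⁻‖ ≤ max C 0 * ‖z‖ := mul_le_mul (le_max_left _ _) (norm_negPart_le_s11 z)
      (norm_nonneg _) (le_max_right _ _)
    rw [Real.norm_eq_abs, abs_le]
    constructor <;> simp only [q, AddMonoidHom.mk'_apply] <;> linarith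
  refine ⟨q.toRealLinearMap (AddMonoidHomClass.continuous_of_bound q _ hq), fun z hz => ?_⟩
  simp [q, posPart_eq_self.mpr hz, negPart_eq_zero.mpr hz, hzero]

lemma exists_strongDual_eq_bandPart [NormedSpace ℝ α] {g : StrongDual ℝ α} (hg : Monotone g)
    {e : α} (he : 0 ≤ e) : ∃ p : StrongDual ℝ α, ∀ z, 0 ≤ z → p z = bandPart g e z :=
  exists_strongDual_eq_of_nonneg _ ‖g‖ (fun _ _ hu hv => bandPart_add hg he hu hv) fun z hz =>
    ⟨bandPart_nonneg hg e hz, (bandPart_le hg e z).trans ((le_abs_self _).trans (g.le_opNorm z))⟩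

end NormedLattice

section DualLattice

variable {α : Type*} [NormedAddCommGroup α] [Lattice α] [NormedSpace ℝ α]
  [Lattice (StrongDual ℝ α)]

lemma strongDual_monotone_of_nonneg [IsOrderedAddMonoid α]
    (hα : ∀ f : StrongDual ℝ α, 0 ≤ f ↔ ∀ z : α, 0 ≤ z → 0 ≤ f z)
    {f : StrongDual ℝ α} (hf : 0 ≤ f) : Monotone f :=
  (monotone_iff_map_nonneg f).mpr ((hα f).mp hf)

variable [AddLeftMono (StrongDual ℝ α)]

lemma strongDual_le_iff (hα : ∀ f : StrongDual ℝ α, 0 ≤ f ↔ ∀ z : α, 0 ≤ z → 0 ≤ f z)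
    {f g : StrongDual ℝ α} : f ≤ g ↔ ∀ z : α, 0 ≤ z → f z ≤ g z := by
  simp only [← sub_nonneg (b := f), hα, sub_apply, sub_nonneg]

variable [IsOrderedAddMonoid α]

lemma apply_le_abs_apply_abs (hα : ∀ f : StrongDual ℝ α, 0 ≤ f ↔ ∀ z : α, 0 ≤ z → 0 ≤ f z)
    (f : StrongDual ℝ α) (z : α) : f z ≤ |f| |z| := by
  have hpos := (strongDual_le_iff hα).mp (le_abs_self f) _ (posPart_nonneg z)
  have hneg := (strongDual_le_iff hα).mp (neg_le_abs f) _ (negPart_nonneg z)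
  rw [neg_apply] at hneg
  rw [← posPart_add_negPart z, map_add]
  conv_lhs => rw [← posPart_sub_negPart z]
  rw [map_sub]
  linarith

lemma inf_eq_zero_of_le_bandPart (hα : ∀ f : StrongDual ℝ α, 0 ≤ f ↔ ∀ z : α, 0 ≤ z → 0 ≤ f z)
    {p₁ p₂ g₁ g₂ : StrongDual ℝ α} (hp₁ : 0 ≤ p₁) (hp₂ : 0 ≤ p₂) (hg₂ : Monotone g₂)
    {e₁ e₂ : α} (he₁ : 0 ≤ e₁) (he₂ : 0 ≤ e₂) (he : e₁ ⊓ e₂ = 0)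
    (h₁ : ∀ z, 0 ≤ z → p₁ z ≤ bandPart g₁ e₁ z) (h₂ : ∀ z, 0 ≤ z → p₂ z ≤ bandPart g₂ e₂ z) :
    p₁ ⊓ p₂ = 0 := by
  refine le_antisymm ?_ (le_inf hp₁ hp₂)
  refine (strongDual_le_iff hα).mpr fun z hz => ?_
  rw [zero_apply]
  refine apply_nonpos_of_le_bandPart (g₁ := g₁) hg₂ he₁ he₂ he (fun y hy => ?_) (fun y hy => ?_) hz
  · exact ((strongDual_le_iff hα).mp inf_le_left y hy).trans (h₁ y hy)
  · exact ((strongDual_le_iff hα).mp inf_le_right y hy).trans (h₂ y hy)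

lemma exists_le_apply_of_abs_le [HasSolidNorm α] [HasSolidNorm (StrongDual ℝ α)]
    (hα : ∀ f : StrongDual ℝ α, 0 ≤ f ↔ ∀ z : α, 0 ≤ z → 0 ≤ f z)
    (f : StrongDual ℝ α) {y w : α} (hyw : |y| ≤ |w|) :
    ∃ h : StrongDual ℝ α, ‖h‖ ≤ ‖f‖ ∧ f y ≤ h w ∧ ∀ z, 0 ≤ z → |h| z ≤ bandPart |f| |y| z := by
  have hf : Monotone ⇑|f| := strongDual_monotone_of_nonneg hα (abs_nonneg f)
  obtain ⟨G, hG⟩ := exists_strongDual_eq_bandPart hf (abs_nonneg y)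
  have hG₀ : 0 ≤ G := (hα G).mpr fun z hz => (hG z hz).symm ▸ bandPart_nonneg hf _ hz
  have hGmono : Monotone G := strongDual_monotone_of_nonneg hα hG₀
  have hGf : G ≤ |f| := (strongDual_le_iff hα).mpr fun z hz =>
    (hG z hz).trans_le (bandPart_le hf _ _)
  obtain ⟨P, hP⟩ := exists_strongDual_eq_bandPart hGmono (posPart_nonneg w)
  have hPG : ∀ z, 0 ≤ z → 0 ≤ P z ∧ P z ≤ G z := fun z hz => by
    rw [hP z hz]; exact ⟨bandPart_nonneg hGmono _ hz, bandPart_le hGmono _ _⟩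
  have habs : |(2 : ℝ) • P - G| ≤ G := by
    refine abs_le'.mpr ⟨(strongDual_le_iff hα).mpr fun z hz => ?_,
      (strongDual_le_iff hα).mpr fun z hz => ?_⟩ <;>
    · simp only [neg_apply, sub_apply, smul_apply, smul_eq_mul]
      linarith [hPG z hz]
  -- `2 P - G` is `G` on the band carried by `w⁺` and `-G` on the one carried by `w⁻`
  refine ⟨(2 : ℝ) • P - G, ?_, ?_, fun z hz => ?_⟩
  · calc ‖(2 : ℝ) • P - G‖ ≤ ‖|f|‖ := HasSolidNorm.solid ((habs.trans hGf).trans (abs_abs f).ge)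
      _ ≤ ‖f‖ := HasSolidNorm.solid (abs_abs f).le
  · calc f y ≤ |f| |y| := apply_le_abs_apply_abs hα f y
      _ = G |y| := by rw [hG _ (abs_nonneg y), bandPart_self hf]
      _ ≤ G |w| := hGmono hyw
      _ = ((2 : ℝ) • P - G) w := by
        rw [sub_apply, smul_apply, smul_eq_mul, two_mul_apply_sub_apply_eq_apply_abs hGmono hP]
  · exact ((strongDual_le_iff hα).mp habs z hz).trans_eq (hG z hz)

lemma exists_disjSeq_norming [HasSolidNorm α] [HasSolidNorm (StrongDual ℝ α)]
    (hα : ∀ f : StrongDual ℝ α, 0 ≤ f ↔ ∀ z : α, 0 ≤ z → 0 ≤ f z)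
    {y w : ℕ → α} (hy : DisjSeq y) (hyw : ∀ n, |y n| ≤ |w n|) :
    ∃ h : ℕ → StrongDual ℝ α, (∀ n, ‖h n‖ ≤ 1) ∧ DisjSeq h ∧ ∀ n, ‖y n‖ ≤ h n (w n) := by
  choose f hf₁ hf₂ using fun n => exists_dual_vector'' ℝ (y n)
  choose h hnorm hle hband using fun n => exists_le_apply_of_abs_le hα (f n) (hyw n)
  refine ⟨h, fun n => (hnorm n).trans (hf₁ n), fun m n hmn => ?_, fun n => (hf₂ n).ge.trans (hle n)⟩
  exact inf_eq_zero_of_le_bandPart hα (abs_nonneg _) (abs_nonneg _)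
    (strongDual_monotone_of_nonneg hα (abs_nonneg (f n))) (abs_nonneg _) (abs_nonneg _)
    (hy m n hmn) (hband m) (hband n)

end DualLattice

lemma ordBddSeq_inclusionInDoubleDual {E : Type*} [NormedAddCommGroup E] [PartialOrder E]
    [IsOrderedAddMonoid E] [NormedSpace ℝ E] [Preorder (StrongDual ℝ E)]
    [Preorder (StrongDual ℝ (StrongDual ℝ E))] [AddLeftMono (StrongDual ℝ (StrongDual ℝ E))]
    (hE' : ∀ f : StrongDual ℝ E, 0 ≤ f ↔ ∀ x : E, 0 ≤ x → 0 ≤ f x)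
    (hE'' : ∀ G : StrongDual ℝ (StrongDual ℝ E), 0 ≤ G ↔ ∀ f : StrongDual ℝ E, 0 ≤ f → 0 ≤ G f)
    {u : ℕ → E} {x : E} (hu : ∀ n, u n ∈ Set.Icc 0 x) :
    OrdBddSeq fun n => inclusionInDoubleDual ℝ E (u n) := by
  have hmono : Monotone (inclusionInDoubleDual ℝ E) := fun a b hab => by
    rw [← sub_nonneg, ← map_sub]
    exact (hE'' _).mpr fun f hf => (hE' f).mp hf _ (sub_nonneg.mpr hab)
  exact ⟨_, _, fun n => ⟨hmono (hu n).1, hmono (hu n).2⟩⟩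


theorem stmt11_general {E F : Type*} [NormedAddCommGroup E] [Lattice E] [IsOrderedAddMonoid E] [NormedSpace ℝ E]
    [NormedAddCommGroup F] [Lattice F] [HasSolidNorm F] [IsOrderedAddMonoid F] [NormedSpace ℝ F]
    [Lattice (StrongDual ℝ E)]
    [Lattice (StrongDual ℝ F)] [HasSolidNorm (StrongDual ℝ F)]
    [CovariantClass (StrongDual ℝ F) (StrongDual ℝ F) (· + ·) (· ≤ ·)]
    [Lattice (StrongDual ℝ (StrongDual ℝ E))]
    [CovariantClass (StrongDual ℝ (StrongDual ℝ E)) (StrongDual ℝ (StrongDual ℝ E)) (· + ·) (· ≤ ·)]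
    (hE' : ∀ f : StrongDual ℝ E, 0 ≤ f ↔ ∀ x : E, 0 ≤ x → 0 ≤ f x) (hF' : ∀ f : StrongDual ℝ F, 0 ≤ f ↔ ∀ y : F, 0 ≤ y → 0 ≤ f y)
    (hE'' : ∀ G : StrongDual ℝ (StrongDual ℝ E), 0 ≤ G ↔ ∀ f : StrongDual ℝ E, 0 ≤ f → 0 ≤ G f)
    (T : E →L[ℝ] F)
    (h : OrderMWC (ContinuousLinearMap.precomp ℝ T :
        StrongDual ℝ F →L[ℝ] StrongDual ℝ E)) :
    OrderLWC T := by
  intro x _ y hy hdisj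
  choose u hu hyu using fun n => show ∃ u ∈ Set.Icc 0 x, |y n| ≤ |T u| from
    let ⟨_, ⟨u, hu, hTu⟩, hle⟩ := hy n; ⟨u, hu, hTu ▸ hle⟩
  obtain ⟨f, hf₁, hf_disj, hf_le⟩ := exists_disjSeq_norming hF' hdisj hyu
  have hnull : Tendsto (fun n => f n (T (u n))) atTop (𝓝 0) :=
    h f hf₁ hf_disj _ (ordBddSeq_inclusionInDoubleDual hE' hE'' hu)
  exact squeeze_zero (fun n => norm_nonneg _) hf_le hnull

theorem stmt11 {E F : Type*} [NormedAddCommGroup E] [Lattice E] [HasSolidNorm E] [IsOrderedAddMonoid E] [NormedSpace ℝ E] [CompleteSpace E]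
    [NormedAddCommGroup F] [Lattice F] [HasSolidNorm F] [IsOrderedAddMonoid F] [NormedSpace ℝ F] [CompleteSpace F]
    [Lattice (StrongDual ℝ E)] [HasSolidNorm (StrongDual ℝ E)]
    [CovariantClass (StrongDual ℝ E) (StrongDual ℝ E) (· + ·) (· ≤ ·)]
    [Lattice (StrongDual ℝ F)] [HasSolidNorm (StrongDual ℝ F)]
    [CovariantClass (StrongDual ℝ F) (StrongDual ℝ F) (· + ·) (· ≤ ·)]
    [Lattice (StrongDual ℝ (StrongDual ℝ E))] [HasSolidNorm (StrongDual ℝ (StrongDual ℝ E))]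
    [CovariantClass (StrongDual ℝ (StrongDual ℝ E)) (StrongDual ℝ (StrongDual ℝ E)) (· + ·) (· ≤ ·)]
    (hE' : ∀ f : StrongDual ℝ E, 0 ≤ f ↔ ∀ x : E, 0 ≤ x → 0 ≤ f x) (hF' : ∀ f : StrongDual ℝ F, 0 ≤ f ↔ ∀ y : F, 0 ≤ y → 0 ≤ f y)
    (hE'' : ∀ G : StrongDual ℝ (StrongDual ℝ E), 0 ≤ G ↔ ∀ f : StrongDual ℝ E, 0 ≤ f → 0 ≤ G f)
    (T : E →L[ℝ] F)
    (h : OrderMWC (ContinuousLinearMap.precomp ℝ T :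
        StrongDual ℝ F →L[ℝ] StrongDual ℝ E)) :
    OrderLWC T :=
  stmt11_general hE' hF' hE'' T h
end

section
/- The identity operator of c₀ is order L-weakly compact but not L-weakly compact, and the rank-one operator T : ℓ¹ → ℓ^∞ defined by T((α_n)) = (Σ α_n)·(1,1,1,...) is compact (hence order weakly compact) but not order L-weakly compact. -/
open Filter Topology NormedSpace

open Filter Topology

/-- indicator of {k} as a c₀ element -/
noncomputable def c0ind (k : ℕ) : ZeroAtInftyContinuousMap ℕ ℝ :=
  ⟨⟨fun n => if n = k then 1 else 0, continuous_of_discreteTopology⟩, by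
    rw [cocompact_eq_atTop (α := ℕ)]
    refine tendsto_atTop_of_eventually_const (i₀ := k+1) fun n hn => ?_
    simp; omega⟩

lemma c0_norm_le {f : ZeroAtInftyContinuousMap ℕ ℝ} {C : ℝ} (hC : 0 ≤ C)
    (h : ∀ n, |f n| ≤ C) : ‖f‖ ≤ C := by
  rw [← ZeroAtInftyContinuousMap.norm_toBCF_eq_norm]
  exact (BoundedContinuousFunction.norm_le hC).mpr (by simpa using h)

lemma c0_apply_le_norm (f : ZeroAtInftyContinuousMap ℕ ℝ) (n : ℕ) : |f n| ≤ ‖f‖ := by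
  rw [← ZeroAtInftyContinuousMap.norm_toBCF_eq_norm]
  simpa using BoundedContinuousFunction.norm_coe_le_norm f.toBCF n

set_option maxHeartbeats 1000000 in
open ZeroAtInfty in
theorem stmt12 :
    -- (a) the identity operator of `c₀` is order L-weakly compact …
    ((∀ x : C₀(ℕ, ℝ), (∀ n, 0 ≤ x n) →
        ∀ y : ℕ → C₀(ℕ, ℝ),
          (∀ k, ∃ a : C₀(ℕ, ℝ), (∀ n, 0 ≤ a n ∧ a n ≤ x n) ∧ ∀ n, |y k n| ≤ |a n|) →
          (∀ k l, k ≠ l → ∀ n, min |y k n| |y l n| = 0) →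
          Tendsto (fun k => ‖y k‖) atTop (𝓝 0)) ∧
      -- … but not L-weakly compact:
      ¬ (∀ y : ℕ → C₀(ℕ, ℝ),
          (∀ k, ∃ a : C₀(ℕ, ℝ), ‖a‖ ≤ 1 ∧ ∀ n, |y k n| ≤ |a n|) →
          (∀ k l, k ≠ l → ∀ n, min |y k n| |y l n| = 0) →
          Tendsto (fun k => ‖y k‖) atTop (𝓝 0))) ∧
    -- (b) the rank one summation operator `T : ℓ¹ → ℓ^∞` is compact
    --     but not order L-weakly compact:
    ∀ T : lp (fun _ : ℕ => ℝ) 1 →L[ℝ] lp (fun _ : ℕ => ℝ) ⊤,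
      (∀ (α : lp (fun _ : ℕ => ℝ) 1) (n : ℕ), T α n = ∑' m : ℕ, α m) →
      IsCompactOperator T ∧
      ¬ (∀ e : lp (fun _ : ℕ => ℝ) 1, (∀ n, 0 ≤ e n) →
          ∀ y : ℕ → lp (fun _ : ℕ => ℝ) ⊤,
            (∀ k, ∃ a : lp (fun _ : ℕ => ℝ) 1, (∀ n, 0 ≤ a n ∧ a n ≤ e n) ∧
              ∀ n, |y k n| ≤ |T a n|) →
            (∀ k l, k ≠ l → ∀ n, min |y k n| |y l n| = 0) →
            Tendsto (fun k => ‖y k‖) atTop (𝓝 0)) := by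
  refine ⟨⟨?_, ?_⟩, ?_⟩
  · -- (a1) order L-weakly compact
    intro x hx y hsol hdisj
    rw [Metric.tendsto_atTop]
    intro ε hε
    -- choose N with x n < ε/2 for n ≥ N
    have hxt : Tendsto x atTop (𝓝 0) := by
      have := zero_at_infty x; rwa [cocompact_eq_atTop (α := ℕ)] at this
    obtain ⟨N, hN⟩ := Metric.tendsto_atTop.mp hxt (ε/2) (by linarith)
    -- at each coordinate, at most one k has y k n ≠ 0
    classical
    let Kn : ℕ → ℕ := fun n => if h : ∃ k, y k n ≠ 0 then h.choose + 1 else 0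
    have hKn : ∀ n k, Kn n ≤ k → y k n = 0 := by
      intro n k hk
      by_contra hy
      have h : ∃ k, y k n ≠ 0 := ⟨k, hy⟩
      have hk0 := h.choose_spec
      have : k = h.choose := by
        by_contra hne
        have := hdisj k h.choose hne n
        have h1 : (0:ℝ) < |y k n| := abs_pos.mpr hy
        have h2 : (0:ℝ) < |y h.choose n| := abs_pos.mpr hk0
        rcases min_cases |y k n| |y h.choose n| with ⟨he, _⟩ | ⟨he, _⟩ <;> linarith [this, he.symm ▸ this]
      have : Kn n = h.choose + 1 := by simp [Kn, h]
      omega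
    refine ⟨(Finset.range N).sup Kn, fun k hk => ?_⟩
    have hnorm : ‖y k‖ ≤ ε/2 := by
      apply c0_norm_le (by linarith)
      intro n
      by_cases hn : n < N
      · have : y k n = 0 := hKn n k (le_trans (Finset.le_sup (Finset.mem_range.mpr hn)) hk)
        simp [this]; linarith
      · obtain ⟨a, ha, hya⟩ := hsol k
        have h1 := hya n
        have h2 := (ha n).1
        have h3 := (ha n).2
        have h4 := hN n (by omega)
        rw [Real.dist_eq, sub_zero] at h4
        have : |a n| = a n := abs_of_nonneg h2
        calc |y k n| ≤ |a n| := h1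
          _ = a n := this
          _ ≤ x n := h3
          _ ≤ |x n| := le_abs_self _
          _ ≤ ε/2 := le_of_lt h4
    rw [Real.dist_eq, sub_zero, abs_of_nonneg (norm_nonneg _)]
    linarith
  · -- (a2) not L-weakly compact
    intro h
    have habs : ∀ n, |c0ind n n| = 1 := by intro n; simp [c0ind]
    have := h (fun k => c0ind k)
      (fun k => ⟨c0ind k, by
        constructor
        · apply c0_norm_le zero_le_one
          intro n; simp [c0ind]; split <;> simp
        · intro n; exact le_refl _⟩)
      (by
        intro k l hkl n
        simp only [c0ind]
        by_cases h1 : n = k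
        · subst h1
          simp [hkl]
        · simp [h1])
    have h2 := this.eventually_lt_const (by norm_num : (0:ℝ) < 1)
    obtain ⟨k, hk⟩ := h2.exists
    have : (1:ℝ) ≤ ‖c0ind k‖ := by
      calc (1:ℝ) = |c0ind k k| := (habs k).symm
        _ ≤ ‖c0ind k‖ := c0_apply_le_norm _ _
    linarith
  · -- (b)
    intro T hT
    classical
    -- the constant-one sequence in ℓ∞
    have hc : Memℓp (fun _ : ℕ => (1:ℝ)) ⊤ :=
      memℓp_infty ⟨1, by rintro r ⟨i, rfl⟩; simp⟩
    set c : lp (fun _ : ℕ => ℝ) ⊤ := ⟨fun _ => (1:ℝ), hc⟩ with hcdef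
    have hTc : ∀ α, T α = (∑' m : ℕ, α m) • c := by
      intro α
      apply lp.ext
      funext n
      rw [lp.coeFn_smul]
      simp only [Pi.smul_apply]
      rw [hT α n]
      show _ = _ • (1:ℝ)
      simp
    have hsum : ∀ α : lp (fun _ : ℕ => ℝ) 1, |∑' m : ℕ, α m| ≤ ‖α‖ := by
      intro α
      have hs : Summable fun m => ‖(α : ℕ → ℝ) m‖ := by
        have := (lp.memℓp α).summable (by norm_num : 0 < (1:ENNReal).toReal)
        simpa using this
      have h1 : ‖α‖ = ∑' m, ‖(α : ℕ → ℝ) m‖ := by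
        rw [lp.norm_eq_tsum_rpow (by norm_num) α]
        simp
      rw [h1]
      simpa using norm_tsum_le_tsum_norm hs
    constructor
    · -- compact
      refine ⟨(fun t : ℝ => t • c) '' Set.Icc (-1) 1, ?_, ?_⟩
      · exact (isCompact_Icc).image (by continuity)
      · refine Filter.mem_of_superset (Metric.closedBall_mem_nhds 0 one_pos) ?_
        intro α hα
        rw [Metric.mem_closedBall, dist_zero_right] at hα
        refine ⟨∑' m : ℕ, α m, ?_, (hTc α).symm⟩
        have := hsum α
        rw [Set.mem_Icc]
        constructor <;> [linarith [abs_le.mp (le_trans this hα) |>.1]; linarith [abs_le.mp (le_trans this hα) |>.2]]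
    · -- not order L-weakly compact
      intro h
      set e : lp (fun _ : ℕ => ℝ) 1 := lp.single 1 0 (1:ℝ) with hedef
      have he : ∀ n, (e : ℕ → ℝ) n = if n = 0 then 1 else 0 := by
        intro n
        rw [hedef, lp.single_apply]
        by_cases h : n = 0
        · subst h; simp
        · simp [h]
      have hepos : ∀ n, 0 ≤ (e : ℕ → ℝ) n := by
        intro n; rw [he n]; split <;> norm_num
      have hTe : ∀ n : ℕ, T e n = (1:ℝ) := by
        intro n
        rw [hT e n]
        have : (fun m => (e : ℕ → ℝ) m) = fun m => if m = 0 then (1:ℝ) else 0 := funext he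
        rw [this, tsum_eq_single 0 (fun b hb => by simp [hb])]
        simp
      set y : ℕ → lp (fun _ : ℕ => ℝ) ⊤ := fun k => lp.single ⊤ k (1:ℝ) with hydef
      have hy : ∀ k n, (y k : ℕ → ℝ) n = if n = k then 1 else 0 := by
        intro k n
        rw [hydef, lp.single_apply]
        by_cases h1 : n = k
        · subst h1; simp
        · simp [h1]
      have := h e hepos y
        (fun k => ⟨e, fun n => ⟨hepos n, le_refl _⟩, fun n => by
          rw [hy, hTe]; split <;> norm_num⟩)
        (by
          intro k l hkl n
          rw [hy, hy]
          by_cases h1 : n = k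
          · subst h1
            rw [if_pos rfl, if_neg hkl]
            simp
          · simp [h1])
      have h2 := this.eventually_lt_const (by norm_num : (0:ℝ) < 1)
      obtain ⟨k, hk⟩ := h2.exists
      have : (1:ℝ) ≤ ‖y k‖ := by
        have h3 := lp.norm_apply_le_norm (ENNReal.top_ne_zero) (y k) k
        rw [hy k k, if_pos rfl, norm_one] at h3
        exact h3
      linarith
end

section
/- For an operator T : E → F between Banach lattices, the following are equivalent: (1) T is order M-weakly compact; (2) for every Banach space Y and every operator S : F → Y whose adjoint S' is strong order bounded, the composition S ∘ T is M-weakly compact; (3) for every operator S : F → ℓ^∞ whose adjoint S' is strong order bounded, the composition S ∘ T is M-weakly compact. -/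
open Filter Topology NormedSpace

open Filter Topology

section AuxLemmas

lemma aux_two_nsmul_semiclosed {G : Type*} [Lattice G] [AddCommGroup G]
    [CovariantClass G G (· + ·) (· ≤ ·)] {a : G} (ha : 0 ≤ 2 • a) : 0 ≤ a := by
  suffices this : (a ⊓ 0) + (a ⊓ 0) = a ⊓ 0 by
    have h0 : a ⊓ 0 = 0 := by
      have := add_eq_left.mp this
      exact this
    exact inf_eq_right.mp h0
  rw [add_inf, inf_add, ← two_nsmul, add_zero, zero_add, inf_assoc, inf_left_idem, inf_comm,
    inf_assoc, inf_of_le_left ha]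

lemma aux_pow2_semiclosed {G : Type*} [Lattice G] [AddCommGroup G]
    [CovariantClass G G (· + ·) (· ≤ ·)] {a : G} :
    ∀ k : ℕ, 0 ≤ (2 ^ k) • a → 0 ≤ a := by
  intro k
  induction k with
  | zero => simpa using id
  | succ k ih =>
    intro h
    apply ih
    apply aux_two_nsmul_semiclosed
    simpa [pow_succ, mul_nsmul] using h

section NLat

variable {E : Type*} [NormedAddCommGroup E] [Lattice E] [HasSolidNorm E] [IsOrderedAddMonoid E] [NormedSpace ℝ E]

lemma aux_smul_nonneg {c : ℝ} (hc : 0 ≤ c) {x : E} (hx : 0 ≤ x) : 0 ≤ c • x := by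
  set u : ℕ → ℝ := fun k => (⌊c * (2 : ℝ) ^ k⌋₊ : ℝ) / (2 : ℝ) ^ k with hu
  have h2k : ∀ k : ℕ, (0 : ℝ) < 2 ^ k := fun k => by positivity
  have h1 : ∀ k, 0 ≤ u k • x := by
    intro k
    apply aux_pow2_semiclosed k
    have hcalc : ((2 : ℕ) ^ k) • (u k • x) = (⌊c * (2 : ℝ) ^ k⌋₊) • x := by
      rw [← Nat.cast_smul_eq_nsmul ℝ, ← Nat.cast_smul_eq_nsmul ℝ (⌊c * (2 : ℝ) ^ k⌋₊), smul_smul]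
      congr 1
      push_cast
      simp only [hu]
      field_simp
    rw [hcalc]
    exact nsmul_nonneg hx _
  have h2 : Tendsto u atTop (𝓝 c) := by
    have hbase : Tendsto (fun k : ℕ => (2 : ℝ) ^ k) atTop atTop :=
      tendsto_pow_atTop_atTop_of_one_lt one_lt_two
    exact (tendsto_nat_floor_mul_div_atTop hc).comp hbase
  have h3 : Tendsto (fun k => u k • x) atTop (𝓝 (c • x)) := h2.smul_const x
  exact isClosed_nonneg.mem_of_tendsto h3 (Filter.Eventually.of_forall h1)

lemma aux_smul_le_self {c : ℝ} (hc0 : 0 ≤ c) (hc1 : c ≤ 1) {x : E} (hx : 0 ≤ x) : c • x ≤ x := by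
  have h := aux_smul_nonneg (sub_nonneg.mpr hc1) hx
  rw [sub_smul, one_smul] at h
  exact sub_nonneg.mp h

lemma aux_abs_smul_le {c : ℝ} (hc0 : 0 ≤ c) (hc1 : c ≤ 1) (x : E) : |c • x| ≤ |x| := by
  have hax : (0 : E) ≤ |x| := abs_nonneg x
  have hkey : c • |x| ≤ |x| := aux_smul_le_self hc0 hc1 hax
  have h1 : c • x ≤ |x| := by
    have := aux_smul_nonneg hc0 (sub_nonneg.mpr (le_abs_self x))
    rw [smul_sub] at this
    exact le_trans (sub_nonneg.mp this) hkey
  have h2 : -(c • x) ≤ |x| := by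
    have := aux_smul_nonneg hc0 (sub_nonneg.mpr (neg_le_abs x))
    rw [smul_sub, smul_neg] at this
    exact le_trans (sub_nonneg.mp this) hkey
  exact abs_le'.mpr ⟨h1, h2⟩

end NLat

end AuxLemmas

set_option maxHeartbeats 1000000 in
lemma aux_h12 {E F : Type*} [NormedAddCommGroup E] [Lattice E] [HasSolidNorm E] [IsOrderedAddMonoid E] [NormedSpace ℝ E]
    [NormedAddCommGroup F] [Lattice F] [HasSolidNorm F] [IsOrderedAddMonoid F] [NormedSpace ℝ F]
    {Y : Type*} [NormedAddCommGroup Y] [NormedSpace ℝ Y]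
    [Lattice (StrongDual ℝ F)]
    (T : E →L[ℝ] F) (hT : OrderMWC T) (S : F →L[ℝ] Y)
    (hS : StrongOrderBounded (ContinuousLinearMap.precomp ℝ S :
      StrongDual ℝ Y →L[ℝ] StrongDual ℝ F)) :
    MWC (S.comp T) := by
  intro x hxC hdisj
  obtain ⟨C, hC⟩ := hxC
  obtain ⟨a, b, hab⟩ := hS
  set C' : ℝ := max C 1 with hC'def
  have hC' : (0 : ℝ) < C' := lt_of_lt_of_le one_pos (le_max_right _ _)
  set c : ℝ := C'⁻¹ with hcdef
  have hc0 : (0 : ℝ) < c := inv_pos.mpr hC'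
  have hc1 : c ≤ 1 := by
    rw [hcdef]
    rw [inv_le_one_iff₀]
    right; exact le_max_right _ _
  set z : ℕ → E := fun n => c • x n with hzdef
  have hz1 : ∀ n, ‖z n‖ ≤ 1 := by
    intro n
    rw [hzdef]
    simp only [norm_smul, Real.norm_eq_abs, abs_of_pos hc0]
    calc c * ‖x n‖ ≤ c * C' := by
          apply mul_le_mul_of_nonneg_left _ hc0.le
          exact le_trans (hC n) (le_max_left _ _)
      _ = 1 := inv_mul_cancel₀ hC'.ne'
  have hzdisj : DisjSeq z := by
    intro m n hmn
    refine le_antisymm ?_ (le_inf (abs_nonneg _) (abs_nonneg _))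
    calc |z m| ⊓ |z n| ≤ |x m| ⊓ |x n| :=
          inf_le_inf (aux_abs_smul_le hc0.le hc1 _) (aux_abs_smul_le hc0.le hc1 _)
      _ = 0 := hdisj m n hmn
  have hg : ∀ n, ∃ g : StrongDual ℝ Y, ‖g‖ ≤ 1 ∧
      g ((S.comp T) (x n)) = ‖(S.comp T) (x n)‖ := by
    intro n
    by_cases h0 : (S.comp T) (x n) = 0
    · exact ⟨0, by simp, by simp [h0]⟩
    · obtain ⟨g, hg1, hg2⟩ := exists_dual_vector ℝ _ (norm_ne_zero_iff.mpr h0)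
      exact ⟨g, le_of_eq hg1, by simpa using hg2⟩
  choose g hgn hgv using hg
  have hf : OrdBddSeq (fun n => (ContinuousLinearMap.precomp ℝ S :
      StrongDual ℝ Y →L[ℝ] StrongDual ℝ F) (g n)) :=
    ⟨a, b, fun n => hab _ (hgn n)⟩
  have hmain := hT z hz1 hzdisj _ hf
  have heq : (fun n => (ContinuousLinearMap.precomp ℝ S :
      StrongDual ℝ Y →L[ℝ] StrongDual ℝ F) (g n) (T (z n))) =
      fun n => c * ‖(S.comp T) (x n)‖ := by
    funext n
    have h1 : (ContinuousLinearMap.precomp ℝ S :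
        StrongDual ℝ Y →L[ℝ] StrongDual ℝ F) (g n) (T (z n)) =
        g n (S (T (c • x n))) := rfl
    rw [h1, map_smul, map_smul, map_smul, smul_eq_mul]
    congr 1
    exact hgv n
  rw [heq] at hmain
  have hmain2 := hmain.const_mul C'
  have hfin : (fun n => C' * (c * ‖(S.comp T) (x n)‖)) =
      fun n => ‖(S.comp T) (x n)‖ := by
    funext n
    rw [← mul_assoc, hcdef, mul_inv_cancel₀ hC'.ne', one_mul]
  rw [hfin] at hmain2
  simpa using hmain2

set_option maxHeartbeats 2000000 in
set_option synthInstance.maxHeartbeats 1000000 in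
theorem stmt17 {E F : Type*} [NormedAddCommGroup E] [Lattice E] [HasSolidNorm E] [IsOrderedAddMonoid E] [NormedSpace ℝ E] [CompleteSpace E]
    [NormedAddCommGroup F] [Lattice F] [HasSolidNorm F] [IsOrderedAddMonoid F] [NormedSpace ℝ F] [CompleteSpace F]
    [Lattice (StrongDual ℝ F)] [HasSolidNorm (StrongDual ℝ F)]
    [CovariantClass (StrongDual ℝ F) (StrongDual ℝ F) (· + ·) (· ≤ ·)]
    (hF' : ∀ f : StrongDual ℝ F, 0 ≤ f ↔ ∀ y : F, 0 ≤ y → 0 ≤ f y)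
    (T : E →L[ℝ] F) :
    (OrderMWC T ↔
      ∀ (Y : Type*) [NormedAddCommGroup Y] [NormedSpace ℝ Y] [CompleteSpace Y]
        (S : F →L[ℝ] Y),
        StrongOrderBounded (ContinuousLinearMap.precomp ℝ S :
          StrongDual ℝ Y →L[ℝ] StrongDual ℝ F) →
        MWC (S.comp T)) ∧
    (OrderMWC T ↔
      ∀ S : F →L[ℝ] lp (fun _ : ℕ => ℝ) ⊤,
        StrongOrderBounded (ContinuousLinearMap.precomp ℝ S :
          StrongDual ℝ (lp (fun _ : ℕ => ℝ) ⊤) →L[ℝ] StrongDual ℝ F) →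
        MWC (S.comp T)) := by
  -- (3) → (1)
  have h31 : (∀ S : F →L[ℝ] lp (fun _ : ℕ => ℝ) ⊤,
        StrongOrderBounded (ContinuousLinearMap.precomp ℝ S :
          StrongDual ℝ (lp (fun _ : ℕ => ℝ) ⊤) →L[ℝ] StrongDual ℝ F) →
        MWC (S.comp T)) → OrderMWC T := by
    intro h x hx hdisj f hf
    obtain ⟨a, b, hab⟩ := hf
    set c : StrongDual ℝ F := |a| + |b| with hcdef
    have hc0 : (0 : StrongDual ℝ F) ≤ c := add_nonneg (abs_nonneg a) (abs_nonneg b)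
    have habs : ∀ u : StrongDual ℝ F, 0 ≤ u → ∀ y : F, 0 ≤ y → 0 ≤ u y :=
      fun u hu => (hF' u).mp hu
    have key : ∀ n, ∀ y : F, 0 ≤ y → |f n y| ≤ c y := by
      intro n y hy
      have h1 : f n y ≤ b y := by
        have := habs (b - f n) (sub_nonneg.mpr (hab n).2) y hy
        rw [ContinuousLinearMap.sub_apply] at this
        linarith
      have h2 : b y ≤ |b| y := by
        have := habs (|b| - b) (sub_nonneg.mpr (le_abs_self b)) y hy
        rw [ContinuousLinearMap.sub_apply] at this
        linarith
      have h3 : -(f n y) ≤ |a| y := by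
        have ha1 : a y ≤ f n y := by
          have := habs (f n - a) (sub_nonneg.mpr (hab n).1) y hy
          rw [ContinuousLinearMap.sub_apply] at this
          linarith
        have ha2 : (-a) y ≤ |a| y := by
          have := habs (|a| - -a) (sub_nonneg.mpr (neg_le_abs a)) y hy
          rw [ContinuousLinearMap.sub_apply] at this
          linarith
        rw [ContinuousLinearMap.neg_apply] at ha2
        linarith
      have h4 : 0 ≤ |a| y := habs _ (abs_nonneg a) y hy
      have h5 : 0 ≤ |b| y := habs _ (abs_nonneg b) y hy
      have hcy : c y = |a| y + |b| y := by rw [hcdef, ContinuousLinearMap.add_apply]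
      rw [abs_le, hcy]
      constructor <;> linarith
    set M : ℝ := ‖a‖ + ‖b - a‖ with hMdef
    have hM0 : 0 ≤ M := add_nonneg (norm_nonneg _) (norm_nonneg _)
    have hM : ∀ n, ‖f n‖ ≤ M := by
      intro n
      have h0 : (0 : StrongDual ℝ F) ≤ f n - a := sub_nonneg.mpr (hab n).1
      have h1 : |f n - a| ≤ |b - a| := by
        rw [abs_of_nonneg h0]
        exact le_trans (sub_le_sub_right (hab n).2 a) (le_abs_self _)
      calc ‖f n‖ = ‖(f n - a) + a‖ := by rw [sub_add_cancel]
        _ ≤ ‖f n - a‖ + ‖a‖ := norm_add_le _ _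
        _ ≤ ‖b - a‖ + ‖a‖ := by
            have := HasSolidNorm.solid h1
            linarith
        _ = M := by rw [hMdef]; ring
    have hmem : ∀ y : F, Memℓp (fun n => f n y) ⊤ := by
      intro y
      apply memℓp_infty
      refine ⟨M * ‖y‖, ?_⟩
      rintro r ⟨n, rfl⟩
      calc ‖f n y‖ ≤ ‖f n‖ * ‖y‖ := (f n).le_opNorm y
        _ ≤ M * ‖y‖ := mul_le_mul_of_nonneg_right (hM n) (norm_nonneg y)
    set S₀ : F →ₗ[ℝ] lp (fun _ : ℕ => ℝ) ⊤ :=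
      { toFun := fun y => ⟨fun n => f n y, hmem y⟩
        map_add' := fun y z => by
          apply Subtype.ext
          funext n
          simp only [map_add]
          rfl
        map_smul' := fun r y => by
          apply Subtype.ext
          funext n
          simp only [map_smul]
          rfl } with hS₀def
    have hS₀app : ∀ (y : F) (n : ℕ), (S₀ y : ∀ _ : ℕ, ℝ) n = f n y := fun y n => rfl
    have hScont : ∀ y : F, ‖S₀ y‖ ≤ M * ‖y‖ := by
      intro y
      apply lp.norm_le_of_forall_le (mul_nonneg hM0 (norm_nonneg y))
      intro n
      rw [hS₀app]
      calc ‖f n y‖ ≤ ‖f n‖ * ‖y‖ := (f n).le_opNorm y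
        _ ≤ M * ‖y‖ := mul_le_mul_of_nonneg_right (hM n) (norm_nonneg y)
    set S : F →L[ℝ] lp (fun _ : ℕ => ℝ) ⊤ := S₀.mkContinuous M hScont with hSdef
    have hSapp : ∀ (y : F) (n : ℕ), (S y : ∀ _ : ℕ, ℝ) n = f n y := fun y n => rfl
    have hSOB : StrongOrderBounded (ContinuousLinearMap.precomp ℝ S :
        StrongDual ℝ (lp (fun _ : ℕ => ℝ) ⊤) →L[ℝ] StrongDual ℝ F) := by
      refine ⟨-c, c, ?_⟩
      intro g hgnorm
      have hptc : ∀ y : F, 0 ≤ y → |g (S y)| ≤ c y := by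
        intro y hy
        have hcy : 0 ≤ c y := habs c hc0 y hy
        have h1 : ‖S y‖ ≤ c y := by
          apply lp.norm_le_of_forall_le hcy
          intro n
          rw [hSapp]
          rw [Real.norm_eq_abs]
          exact key n y hy
        calc |g (S y)| = ‖g (S y)‖ := (Real.norm_eq_abs _).symm
          _ ≤ ‖g‖ * ‖S y‖ := g.le_opNorm _
          _ ≤ 1 * (c y) := by
              apply mul_le_mul hgnorm h1 (norm_nonneg _) zero_le_one
          _ = c y := one_mul _
      have hgc : (ContinuousLinearMap.precomp ℝ S :
          StrongDual ℝ (lp (fun _ : ℕ => ℝ) ⊤) →L[ℝ] StrongDual ℝ F) g =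
          g.comp S := rfl
      constructor
      · rw [hgc]
        have : (0 : StrongDual ℝ F) ≤ g.comp S - -c := by
          apply (hF' _).mpr
          intro y hy
          rw [ContinuousLinearMap.sub_apply, ContinuousLinearMap.neg_apply]
          have := neg_le_of_abs_le (hptc y hy)
          have happ : (g.comp S) y = g (S y) := rfl
          rw [happ]
          linarith
        exact sub_nonneg.mp this
      · rw [hgc]
        have : (0 : StrongDual ℝ F) ≤ c - g.comp S := by
          apply (hF' _).mpr
          intro y hy
          rw [ContinuousLinearMap.sub_apply]
          have := le_of_abs_le (hptc y hy)
          have happ : (g.comp S) y = g (S y) := rfl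
          rw [happ]
          linarith
        exact sub_nonneg.mp this
    have hm := h S hSOB x ⟨1, hx⟩ hdisj
    apply squeeze_zero_norm _ hm
    intro n
    have happ : f n (T (x n)) = ((S.comp T) (x n) : ∀ _ : ℕ, ℝ) n := rfl
    rw [happ]
    exact lp.norm_apply_le_norm ENNReal.top_ne_zero _ n
  constructor
  · constructor
    · intro hT Y _ _ _ S hS
      exact aux_h12 T hT S hS
    · intro h2
      apply h31
      intro S hS
      obtain ⟨a, b, hab⟩ := hS
      set L : ↥(lp (fun _ : ℕ => ℝ) ⊤) ≃ₗᵢ[ℝ] ULift.{u_3} ↥(lp (fun _ : ℕ => ℝ) ⊤) :=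
        { toLinearEquiv := ULift.moduleEquiv.symm, norm_map' := fun x => rfl } with hLdef
      set S₂ := L.toLinearIsometry.toContinuousLinearMap.comp S with hS₂def
      have hSOB₂ : StrongOrderBounded (X := StrongDual ℝ (ULift.{u_3} ↥(lp (fun _ : ℕ => ℝ) ⊤))) (H := StrongDual ℝ F) (ContinuousLinearMap.precomp ℝ S₂ :
          StrongDual ℝ (ULift.{u_3} ↥(lp (fun _ : ℕ => ℝ) ⊤)) →L[ℝ] StrongDual ℝ F) := by
        refine ⟨a, b, ?_⟩
        intro g hg
        have hnorm : ‖g.comp L.toLinearIsometry.toContinuousLinearMap‖ ≤ 1 := by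
          calc ‖g.comp L.toLinearIsometry.toContinuousLinearMap‖
              ≤ ‖g‖ * ‖L.toLinearIsometry.toContinuousLinearMap‖ :=
                ContinuousLinearMap.opNorm_comp_le _ _
            _ ≤ 1 * 1 := mul_le_mul hg (LinearIsometry.norm_toContinuousLinearMap_le _)
                (norm_nonneg _) zero_le_one
            _ = 1 := one_mul 1
        have heq : (ContinuousLinearMap.precomp ℝ S₂ :
            StrongDual ℝ (ULift.{u_3} ↥(lp (fun _ : ℕ => ℝ) ⊤)) →L[ℝ] StrongDual ℝ F) g =
            (ContinuousLinearMap.precomp ℝ S :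
            StrongDual ℝ ↥(lp (fun _ : ℕ => ℝ) ⊤) →L[ℝ] StrongDual ℝ F)
            (g.comp L.toLinearIsometry.toContinuousLinearMap) := by
          ext y
          rfl
        rw [heq]
        exact hab _ hnorm
      have hm := h2 (ULift.{u_3} ↥(lp (fun _ : ℕ => ℝ) ⊤)) S₂ hSOB₂
      intro x hb hd
      have hten := hm x hb hd
      have hnorm2 : (fun n => ‖(S₂.comp T) (x n)‖) = fun n => ‖(S.comp T) (x n)‖ := by
        funext n
        rfl
      rwa [hnorm2] at hten
  · constructor
    · intro hT S hS
      exact aux_h12 T hT S hS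
    · exact h31
end
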